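/- arXiv:1903.06291 — 9 statements merged into one kernel-verified Lean document; each statement's English description precedes it below -/
import Mathlib

section
/- Let α>1, β>1, δ>0. There is no nonconstant periodic solution of the system dx/dt = x(1-x-αy), dy/dt = δy(1-y-βx) contained in the open first quadrant; that is, there exist no T>0 and differentiable functions x,y:ℝ→ℝ with x(t)>0 and y(t)>0 for all t, satisfying x'(t)=x(t)(1-x(t)-αy(t)) and y'(t)=δy(t)(1-y(t)-βx(t)) for all t, with x(t+T)=x(t) and y(t+T)=y(t) for all t, and with (x,y) not constant. -/
/-!
Writing `u = 1 - x - α y` and `v = 1 - y - β x` for the per-capita growth rates (so that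
`x' = x u` and `y' = δ y v`), the quadratic form `V = 2αβ u v - α v² - β u²` satisfies
`V' = 2 (1 - αβ) (β x u² + αδ y v²)` along every solution. For `αβ > 1` this is `≤ 0` in the open
quadrant, so `V` is a Lyapunov function. Along a periodic solution `V` is then periodic and
antitone, hence constant, which forces `u = v = 0`, i.e. `x' = y' = 0`.
-/

open Function

theorem Antitone.eq_of_periodic {β : Type*} [PartialOrder β] {f : ℝ → β} {c : ℝ}
    (hf : Antitone f) (hp : Periodic f c) (hc : 0 < c) (s t : ℝ) : f s = f t := by
  have h_on_period : ∀ r ∈ Set.Ico 0 c, f r = f 0 := fun r hr =>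
    le_antisymm (hf hr.1) (hp.eq ▸ hf hr.2.le)
  obtain ⟨s', hs', hs⟩ := hp.exists_mem_Ico₀ hc s
  obtain ⟨t', ht', ht⟩ := hp.exists_mem_Ico₀ hc t
  rw [hs, ht, h_on_period s' hs', h_on_period t' ht']

theorem Function.Periodic.hasDerivAt_eq_zero_of_nonpos {f f' : ℝ → ℝ} {c : ℝ}
    (hp : Periodic f c) (hc : 0 < c) (hf : ∀ t, HasDerivAt f (f' t) t) (hf' : ∀ t, f' t ≤ 0)
    (t : ℝ) : f' t = 0 := by
  have hconst : f = fun _ => f t :=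
    funext fun s => (antitone_of_hasDerivAt_nonpos hf hf').eq_of_periodic hp hc s t
  rw [hconst] at hf
  exact (hf t).unique (hasDerivAt_const t (f t))

namespace LotkaVolterra

def lyapunov (α β x y : ℝ) : ℝ :=
  2 * α * β * (1 - x - α * y) * (1 - y - β * x) - α * (1 - y - β * x) ^ 2
    - β * (1 - x - α * y) ^ 2

theorem hasDerivAt_lyapunov {α β δ t : ℝ} {x y : ℝ → ℝ}
    (hx : HasDerivAt x (x t * (1 - x t - α * y t)) t)
    (hy : HasDerivAt y (δ * y t * (1 - y t - β * x t)) t) :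
    HasDerivAt (fun s => lyapunov α β (x s) (y s))
      (2 * (1 - α * β) *
        (β * x t * (1 - x t - α * y t) ^ 2 + α * δ * y t * (1 - y t - β * x t) ^ 2)) t := by
  have hu : HasDerivAt (fun s => 1 - x s - α * y s)
      (0 - x t * (1 - x t - α * y t) - α * (δ * y t * (1 - y t - β * x t))) t :=
    ((hasDerivAt_const t 1).sub hx).sub (hy.const_mul α)
  have hv : HasDerivAt (fun s => 1 - y s - β * x s)
      (0 - δ * y t * (1 - y t - β * x t) - β * (x t * (1 - x t - α * y t))) t :=
    ((hasDerivAt_const t 1).sub hy).sub (hx.const_mul β)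
  unfold lyapunov
  exact ((((hu.const_mul (2 * α * β)).mul hv).sub ((hv.pow 2).const_mul α)).sub
    ((hu.pow 2).const_mul β)).congr_deriv (by ring)

end LotkaVolterra

open LotkaVolterra in
/-- The Lotka–Volterra competition system has no nonconstant periodic
solution contained in the open first quadrant. -/
theorem stmt_2 (α β δ : ℝ) (hα : 1 < α) (hβ : 1 < β) (hδ : 0 < δ) :
    ¬ ∃ (T : ℝ) (x y : ℝ → ℝ), 0 < T ∧
      (∀ t, 0 < x t) ∧ (∀ t, 0 < y t) ∧
      (∀ t, HasDerivAt x (x t * (1 - x t - α * y t)) t) ∧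
      (∀ t, HasDerivAt y (δ * y t * (1 - y t - β * x t)) t) ∧
      (∀ t, x (t + T) = x t) ∧ (∀ t, y (t + T) = y t) ∧
      ¬ (∀ t s, x t = x s ∧ y t = y s) := by
  rintro ⟨T, x, y, hT, hx0, hy0, hdx, hdy, hxT, hyT, hnc⟩
  have hα0 : 0 < α := by linarith
  have hβ0 : 0 < β := by linarith
  have hαβ : 1 - α * β < 0 := by nlinarith
  have hV := fun t => hasDerivAt_lyapunov (hdx t) (hdy t)
  have hVT : Periodic (fun s => lyapunov α β (x s) (y s)) T := fun t => by
    simp only [hxT, hyT]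
  have hV' := hVT.hasDerivAt_eq_zero_of_nonpos hT hV fun t =>
    mul_nonpos_of_nonpos_of_nonneg (by linarith) (by have := hx0 t; have := hy0 t; positivity)
  have hrates (t : ℝ) : 1 - x t - α * y t = 0 ∧ 1 - y t - β * x t = 0 := by
    have := hx0 t
    have := hy0 t
    obtain ⟨hu, hv⟩ := (add_eq_zero_iff_of_nonneg (by positivity) (by positivity)).1
      ((mul_eq_zero.1 (hV' t)).resolve_left (by linarith))
    exact ⟨pow_eq_zero_iff two_ne_zero |>.1 ((mul_eq_zero.1 hu).resolve_left (by positivity)),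
      pow_eq_zero_iff two_ne_zero |>.1 ((mul_eq_zero.1 hv).resolve_left (by positivity))⟩
  have hxc : ∀ t s, x t = x s := is_const_of_deriv_eq_zero (fun t => (hdx t).differentiableAt)
    fun t => by rw [(hdx t).deriv, (hrates t).1, mul_zero]
  have hyc : ∀ t s, y t = y s := is_const_of_deriv_eq_zero (fun t => (hdy t).differentiableAt)
    fun t => by rw [(hdy t).deriv, (hrates t).2, mul_zero]
  exact hnc fun t s => ⟨hxc t s, hyc t s⟩
end

section
/- Let α>1, β>1, δ>0 and set A=(α-1)/(αβ-1), B=(β-1)/(αβ-1). Every solution (x(t),y(t)) of the system dx/dt = x(1-x-αy), dy/dt = δy(1-y-βx) defined on [0,∞) with x(0)≥0 and y(0)≥0 converges, as t→∞, to one of the four equilibrium points (0,0), (1,0), (0,1), (A,B). -/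
/-!
A solution stays in the closed first quadrant and is bounded: `x' = x f` and `y' = δ y g`,
with `f = 1 - x - α y` and `g = 1 - y - β x`, preserve the signs of `x` and `y`, and `x' < 0` as
soon as `x > 1` (likewise for `y`). The nullcline functions solve the linear system
`f' = -x f - αδ y g`, `g' = -β x f - δ y g`, whose off-diagonal coefficients are negative inside
the quadrant. Hence `{f ≤ 0 ≤ g}` and `{g ≤ 0 ≤ f}` are forward invariant (at the corner
`f = g = 0` by Grönwall's inequality), and a solution that never meets them has `f` and `g` of one
common strict sign. In every case `x'` and `y'` eventually have constant sign, so `x` and `y` are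
eventually monotone and bounded, hence converge; the limit is an equilibrium because a convergent
function cannot have a derivative tending to a nonzero limit.
-/

open Filter Set Topology

def EventuallyConstSign (f : ℝ → ℝ) : Prop :=
  (∀ᶠ t in atTop, 0 ≤ f t) ∨ ∀ᶠ t in atTop, f t ≤ 0

theorem EventuallyConstSign.mul_left {f g : ℝ → ℝ} (hf : ∀ᶠ t in atTop, 0 ≤ f t)
    (hg : EventuallyConstSign g) : EventuallyConstSign fun t => f t * g t :=
  hg.imp (fun hg => (hf.and hg).mono fun _ h => mul_nonneg h.1 h.2)
    fun hg => (hf.and hg).mono fun _ h => mul_nonpos_of_nonneg_of_nonpos h.1 h.2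

theorem eq_mul_exp_integral_of_hasDerivWithinAt {u c : ℝ → ℝ} {a : ℝ}
    (hc : ContinuousOn c (Ici a))
    (hu : ∀ t ∈ Ici a, HasDerivWithinAt u (u t * c t) (Ici a) t) :
    ∀ t ∈ Ici a, u t = u a * Real.exp (∫ s in a..t, c s) := by
  -- `c ∘ max a` is a continuous extension of `c` to `ℝ`, so its primitive is differentiable
  set C : ℝ → ℝ := fun t => ∫ s in a..t, c (max a s)
  have hc' : Continuous fun s => c (max a s) :=
    hc.comp_continuous (continuous_const.max continuous_id) (le_max_left a)
  have hC : ∀ t, HasDerivAt C (c (max a t)) t := fun t =>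
    (hc'.integral_hasStrictDerivAt a t).hasDerivAt
  have hv : ∀ t ∈ Ici a, HasDerivWithinAt (fun s => u s * Real.exp (-C s)) 0 (Ici a) t := by
    intro t ht
    refine ((hu t ht).mul (hC t).neg.exp.hasDerivWithinAt).congr_deriv ?_
    rw [max_eq_right (mem_Ici.1 ht)]
    ring
  intro t ht
  have hconst := constant_of_has_deriv_right_zero
    (fun s hs => (hv s hs.1).continuousWithinAt.mono Icc_subset_Ici_self)
    (fun s hs => (hv s hs.1).mono (Ici_subset_Ici.2 hs.1)) t ⟨ht, le_rfl⟩
  have hCt : C t = ∫ s in a..t, c s := intervalIntegral.integral_congr fun s hs => by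
    rw [uIcc_of_le ht] at hs
    simp only [max_eq_right hs.1]
  simp only [C, intervalIntegral.integral_same, neg_zero, Real.exp_zero, mul_one] at hconst
  rw [← hCt, ← hconst, mul_assoc, ← Real.exp_add, neg_add_cancel, Real.exp_zero, mul_one]

theorem sign_eq_sign_of_hasDerivWithinAt_mul {u c : ℝ → ℝ} {a : ℝ}
    (hc : ContinuousOn c (Ici a))
    (hu : ∀ t ∈ Ici a, HasDerivWithinAt u (u t * c t) (Ici a) t) :
    ∀ t ∈ Ici a, SignType.sign (u t) = SignType.sign (u a) := fun t ht => by
  rw [eq_mul_exp_integral_of_hasDerivWithinAt hc hu t ht, sign_mul, sign_pos (Real.exp_pos _),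
    mul_one]

theorem eventuallyConstSign_of_hasDerivWithinAt_mul {u c : ℝ → ℝ} {a : ℝ}
    (hc : ContinuousOn c (Ici a))
    (hu : ∀ t ∈ Ici a, HasDerivWithinAt u (u t * c t) (Ici a) t) : EventuallyConstSign u := by
  have hsign := sign_eq_sign_of_hasDerivWithinAt_mul hc hu
  refine (le_total 0 (u a)).imp (fun h => ?_) fun h => ?_ <;>
    refine eventually_atTop.2 ⟨a, fun t ht => ?_⟩
  · exact sign_nonneg_iff.1 (hsign t ht ▸ sign_nonneg_iff.2 h)
  · exact sign_nonpos_iff.1 (hsign t ht ▸ sign_nonpos_iff.2 h)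

theorem le_max_of_deriv_neg_of_lt {u u' : ℝ → ℝ} {a K : ℝ}
    (hu : ∀ t ∈ Ici a, HasDerivWithinAt u (u' t) (Ici a) t)
    (h : ∀ t ∈ Ici a, K < u t → u' t < 0) : ∀ t ∈ Ici a, u t ≤ max (u a) K := by
  intro t ht
  have hK := le_max_right (u a) K
  refine le_of_forall_pos_le_add fun ε hε => image_le_of_deriv_right_lt_deriv_boundary'
    (fun s hs => (hu s hs.1).continuousWithinAt.mono Icc_subset_Ici_self)
    (fun s hs => (hu s hs.1).mono (Ici_subset_Ici.2 hs.1)) (by linarith [le_max_left (u a) K])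
    continuousOn_const (fun s _ => hasDerivWithinAt_const s _ _)
    (fun s hs hus => h s hs.1 (by linarith)) ⟨ht, le_rfl⟩

theorem monotoneOn_Ici_of_hasDerivWithinAt_nonneg {u u' : ℝ → ℝ} {a b : ℝ} (hab : a ≤ b)
    (hu : ∀ t ∈ Ici a, HasDerivWithinAt u (u' t) (Ici a) t) (h : ∀ t ∈ Ioi b, 0 ≤ u' t) :
    MonotoneOn u (Ici b) := by
  have hsub : Ici b ⊆ Ici a := Ici_subset_Ici.2 hab
  refine monotoneOn_of_hasDerivWithinAt_nonneg (f' := u') (convex_Ici b)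
    (fun t ht => (hu t (hsub ht)).continuousWithinAt.mono hsub) (fun t ht => ?_) ?_
  · rw [interior_Ici] at ht ⊢
    exact (hu t (hsub (mem_Ici.2 (mem_Ioi.1 ht).le))).mono (Ioi_subset_Ici_self.trans hsub)
  · rwa [interior_Ici]

theorem exists_tendsto_of_eventually_deriv_nonneg {u u' : ℝ → ℝ} {a M : ℝ}
    (hu : ∀ t ∈ Ici a, HasDerivWithinAt u (u' t) (Ici a) t) (hM : ∀ t ∈ Ici a, u t ≤ M)
    (hu' : ∀ᶠ t in atTop, 0 ≤ u' t) : ∃ L, Tendsto u atTop (𝓝 L) := by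
  obtain ⟨b, hb⟩ := eventually_atTop.1 (hu'.and (eventually_ge_atTop a))
  have hmono : MonotoneOn u (Ici b) :=
    monotoneOn_Ici_of_hasDerivWithinAt_nonneg (hb b le_rfl).2 hu fun t ht => (hb t ht.le).1
  refine ⟨_, tendsto_comp_val_Ici_atTop.1 (tendsto_atTop_ciSup (f := fun t : Ici b => u t)
    (fun s t hst => hmono s.2 t.2 hst) ⟨M, ?_⟩)⟩
  rintro _ ⟨t, rfl⟩
  exact hM t ((hb b le_rfl).2.trans t.2)

theorem exists_tendsto_of_eventuallyConstSign_deriv {u u' : ℝ → ℝ} {a m M : ℝ}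
    (hu : ∀ t ∈ Ici a, HasDerivWithinAt u (u' t) (Ici a) t) (hm : ∀ t ∈ Ici a, m ≤ u t)
    (hM : ∀ t ∈ Ici a, u t ≤ M) (hu' : EventuallyConstSign u') : ∃ L, Tendsto u atTop (𝓝 L) := by
  rcases hu' with hu' | hu'
  · exact exists_tendsto_of_eventually_deriv_nonneg hu hM hu'
  · obtain ⟨L, hL⟩ := exists_tendsto_of_eventually_deriv_nonneg (fun t ht => (hu t ht).neg)
      (fun t ht => neg_le_neg (hm t ht)) (hu'.mono fun _ => neg_nonneg.2)
    exact ⟨-L, by simpa using hL.neg⟩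

theorem nonpos_of_tendsto_of_hasDerivWithinAt {u u' : ℝ → ℝ} {a L c : ℝ}
    (hu : ∀ t ∈ Ici a, HasDerivWithinAt u (u' t) (Ici a) t) (hL : Tendsto u atTop (𝓝 L))
    (hc : Tendsto u' atTop (𝓝 c)) : c ≤ 0 := by
  by_contra! hc0
  -- `u t - c / 2 * t` is eventually monotone, yet tends to `-∞`
  obtain ⟨b, hb⟩ := eventually_atTop.1
    ((hc.eventually (lt_mem_nhds (half_lt_self hc0))).and (eventually_ge_atTop a))
  have hmono : MonotoneOn (fun t => u t - c / 2 * t) (Ici b) :=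
    monotoneOn_Ici_of_hasDerivWithinAt_nonneg (hb b le_rfl).2
      (fun t ht => (hu t ht).sub (((hasDerivWithinAt_id t _).const_mul (c / 2)).congr_deriv
        (mul_one _)))
      fun t ht => sub_nonneg.2 (hb t (mem_Ioi.1 ht).le).1.le
  have hbot : Tendsto (fun t => u t - c / 2 * t) atTop atBot := by
    simpa only [neg_mul, id, ← sub_eq_add_neg] using
      hL.add_atBot (tendsto_id.const_mul_atTop_of_neg (neg_neg_of_pos (half_pos hc0)))
  obtain ⟨t, hlt, hbt⟩ :=
    ((hbot.eventually_lt_atBot (u b - c / 2 * b)).and (eventually_ge_atTop b)).exists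
  exact hlt.not_ge (hmono self_mem_Ici hbt hbt)

theorem eq_zero_of_tendsto_of_hasDerivWithinAt {u u' : ℝ → ℝ} {a L c : ℝ}
    (hu : ∀ t ∈ Ici a, HasDerivWithinAt u (u' t) (Ici a) t) (hL : Tendsto u atTop (𝓝 L))
    (hc : Tendsto u' atTop (𝓝 c)) : c = 0 :=
  le_antisymm (nonpos_of_tendsto_of_hasDerivWithinAt hu hL hc) <| neg_nonpos.1 <|
    nonpos_of_tendsto_of_hasDerivWithinAt (fun t ht => (hu t ht).neg) hL.neg hc.neg

theorem abs_mul_add_mul_le (a b p q : ℝ) : |a * p + b * q| ≤ (|a| + |b|) * max |p| |q| :=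
  calc |a * p + b * q| ≤ |a| * |p| + |b| * |q| := by
        simpa only [abs_mul] using abs_add_le (a * p) (b * q)
    _ ≤ |a| * max |p| |q| + |b| * max |p| |q| := by gcongr <;> simp
    _ = (|a| + |b|) * max |p| |q| := by ring

theorem HasDerivWithinAt.eventually_nhdsGT_neg {f : ℝ → ℝ} {f' x : ℝ}
    (hf : HasDerivWithinAt f f' (Ici x) x) (h : f x < 0 ∨ f x = 0 ∧ f' < 0) :
    ∀ᶠ t in 𝓝[>] x, f t < 0 := by
  rcases h with h | ⟨h, hf'⟩
  · exact (hf.continuousWithinAt.mono Ioi_subset_Ici_self).eventually_lt_const h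
  · filter_upwards [hf.Ioi_of_Ici.limsup_slope_le' (lt_irrefl x) hf', self_mem_nhdsWithin]
      with t hslope ht
    rw [slope_def_field, h, sub_zero] at hslope
    exact ((div_neg_iff.1 hslope).resolve_left fun h' => (sub_pos.2 ht).not_gt h'.2).1

theorem nonneg_of_continuousOn_Ici_of_ne_zero {f : ℝ → ℝ} {a : ℝ} (hf : ContinuousOn f (Ici a))
    (hne : ∀ t ∈ Ici a, f t ≠ 0) (ha : 0 ≤ f a) : ∀ t ∈ Ici a, 0 ≤ f t := by
  intro t ht
  by_contra! h
  obtain ⟨s, hs, hfs⟩ := isPreconnected_Ici.intermediate_value₂ ht self_mem_Ici hf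
    continuousOn_const h.le ha
  exact hne s hs hfs

structure IsLinearSolution (a b c e p q : ℝ → ℝ) (t₀ : ℝ) : Prop where
  hasDerivWithinAt_fst : ∀ t ∈ Ici t₀, HasDerivWithinAt p (a t * p t + b t * q t) (Ici t₀) t
  hasDerivWithinAt_snd : ∀ t ∈ Ici t₀, HasDerivWithinAt q (c t * p t + e t * q t) (Ici t₀) t
  continuousOn_a : ContinuousOn a (Ici t₀)
  continuousOn_b : ContinuousOn b (Ici t₀)
  continuousOn_c : ContinuousOn c (Ici t₀)
  continuousOn_e : ContinuousOn e (Ici t₀)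

namespace IsLinearSolution

variable {a b c e p q : ℝ → ℝ} {t₀ : ℝ}

theorem neg (S : IsLinearSolution a b c e p q t₀) :
    IsLinearSolution a b c e (fun t => -p t) (fun t => -q t) t₀ where
  hasDerivWithinAt_fst t ht := (S.hasDerivWithinAt_fst t ht).neg.congr_deriv (by ring)
  hasDerivWithinAt_snd t ht := (S.hasDerivWithinAt_snd t ht).neg.congr_deriv (by ring)
  continuousOn_a := S.continuousOn_a
  continuousOn_b := S.continuousOn_b
  continuousOn_c := S.continuousOn_c
  continuousOn_e := S.continuousOn_e

theorem continuousOn_fst (S : IsLinearSolution a b c e p q t₀) : ContinuousOn p (Ici t₀) :=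
  fun t ht => (S.hasDerivWithinAt_fst t ht).continuousWithinAt

theorem continuousOn_snd (S : IsLinearSolution a b c e p q t₀) : ContinuousOn q (Ici t₀) :=
  fun t ht => (S.hasDerivWithinAt_snd t ht).continuousWithinAt

theorem eq_zero_of_eq_zero (S : IsLinearSolution a b c e p q t₀) {τ : ℝ} (hτ : τ ∈ Ici t₀)
    (hp : p τ = 0) (hq : q τ = 0) (T : ℝ) : ∀ t ∈ Icc τ T, p t = 0 ∧ q t = 0 := by
  have hsub : Icc τ T ⊆ Ici t₀ := fun t ht => le_trans hτ ht.1
  have hcont : ContinuousOn (fun t => |a t| + |b t| + |c t| + |e t|) (Icc τ T) :=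
    (((S.continuousOn_a.abs.add S.continuousOn_b.abs).add S.continuousOn_c.abs).add
      S.continuousOn_e.abs).mono hsub
  obtain ⟨K, hK⟩ := isCompact_Icc.exists_bound_of_continuousOn hcont
  have hzero := eq_zero_of_abs_deriv_le_mul_abs_self_of_eq_zero_right (K := K)
    (f := fun t => (p t, q t)) (f' := fun t => (a t * p t + b t * q t, c t * p t + e t * q t))
    ((S.continuousOn_fst.prodMk S.continuousOn_snd).mono hsub)
    (fun t ht => ((S.hasDerivWithinAt_fst t (hsub (Ico_subset_Icc_self ht))).prodMk
      (S.hasDerivWithinAt_snd t (hsub (Ico_subset_Icc_self ht)))).mono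
        (Ici_subset_Ici.2 (hsub (Ico_subset_Icc_self ht))))
    (by simp [hp, hq]) fun t ht => by
      have hKt := (le_abs_self _).trans (hK t (Ico_subset_Icc_self ht))
      simp only [Prod.norm_def, Real.norm_eq_abs]
      refine max_le ((abs_mul_add_mul_le _ _ _ _).trans ?_)
        ((abs_mul_add_mul_le _ _ _ _).trans ?_) <;> gcongr <;>
        linarith [abs_nonneg (a t), abs_nonneg (b t), abs_nonneg (c t), abs_nonneg (e t)]
  exact fun t ht => Prod.ext_iff.1 (hzero t ht)

theorem quadrant_mem_nhdsGT (S : IsLinearSolution a b c e p q t₀)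
    (hb : ∀ t ∈ Ici t₀, b t < 0) (hc : ∀ t ∈ Ici t₀, c t < 0) {τ : ℝ} (hτ : τ ∈ Ici t₀)
    (hpτ : p τ ≤ 0) (hqτ : 0 ≤ q τ) :
    {t | p t ≤ 0 ∧ 0 ≤ q t} ∈ 𝓝[>] τ := by
  by_cases hcorner : p τ = 0 ∧ q τ = 0
  · filter_upwards [Icc_mem_nhdsGT (lt_add_one τ)] with t ht
    obtain ⟨hpt, hqt⟩ := S.eq_zero_of_eq_zero hτ hcorner.1 hcorner.2 _ t ht
    exact ⟨hpt.le, hqt.ge⟩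
  -- off the corner, each boundary is crossed inwards since `b < 0` and `c < 0`
  have hp : p τ < 0 ∨ p τ = 0 ∧ a τ * p τ + b τ * q τ < 0 := by
    refine hpτ.lt_or_eq.imp_right fun h => ⟨h, ?_⟩
    have : 0 < q τ := hqτ.lt_of_ne' fun h' => hcorner ⟨h, h'⟩
    rw [h, mul_zero, zero_add]
    exact mul_neg_of_neg_of_pos (hb τ hτ) this
  have hq : -q τ < 0 ∨ -q τ = 0 ∧ -(c τ * p τ + e τ * q τ) < 0 := by
    refine (neg_nonpos.2 hqτ).lt_or_eq.imp_right fun h => ⟨h, ?_⟩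
    have : p τ < 0 := hpτ.lt_of_ne fun h' => hcorner ⟨h', neg_eq_zero.1 h⟩
    rw [neg_eq_zero.1 h, mul_zero, add_zero, neg_neg_iff_pos]
    exact mul_pos_of_neg_of_neg (hc τ hτ) this
  have hsub : Ici τ ⊆ Ici t₀ := Ici_subset_Ici.2 hτ
  filter_upwards [((S.hasDerivWithinAt_fst τ hτ).mono hsub).eventually_nhdsGT_neg hp,
    ((S.hasDerivWithinAt_snd τ hτ).neg.mono hsub).eventually_nhdsGT_neg hq] with t hpt hqt
  exact ⟨hpt.le, (neg_neg_iff_pos.1 hqt).le⟩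

theorem quadrant_invariant (S : IsLinearSolution a b c e p q t₀)
    (hb : ∀ t ∈ Ici t₀, b t < 0) (hc : ∀ t ∈ Ici t₀, c t < 0) {t₁ : ℝ} (ht₁ : t₁ ∈ Ici t₀)
    (hp : p t₁ ≤ 0) (hq : 0 ≤ q t₁) : ∀ t ∈ Ici t₁, p t ≤ 0 ∧ 0 ≤ q t := by
  intro T hT
  have hsub : Icc t₁ T ⊆ Ici t₀ := fun t ht => le_trans ht₁ ht.1
  have hclosed : IsClosed ({t | p t ≤ 0 ∧ 0 ≤ q t} ∩ Icc t₁ T) := by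
    rw [inter_comm]
    exact ((S.continuousOn_fst.mono hsub).prodMk
      (S.continuousOn_snd.mono hsub)).preimage_isClosed_of_isClosed isClosed_Icc
        (isClosed_Iic.prod isClosed_Ici)
  exact hclosed.Icc_subset_of_forall_mem_nhdsWithin ⟨hp, hq⟩
    (fun τ hτ => S.quadrant_mem_nhdsGT hb hc (le_trans ht₁ hτ.2.1) hτ.1.1 hτ.1.2) ⟨hT, le_rfl⟩

theorem eventuallyConstSign (S : IsLinearSolution a b c e p q t₀) (hb : ∀ t ∈ Ici t₀, b t < 0)
    (hc : ∀ t ∈ Ici t₀, c t < 0) : EventuallyConstSign p ∧ EventuallyConstSign q := by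
  by_cases h₁ : ∃ t ∈ Ici t₀, p t ≤ 0 ∧ 0 ≤ q t
  · obtain ⟨t₁, ht₁, hp, hq⟩ := h₁
    have h := S.quadrant_invariant hb hc ht₁ hp hq
    exact ⟨.inr (eventually_atTop.2 ⟨t₁, fun t ht => (h t ht).1⟩),
      .inl (eventually_atTop.2 ⟨t₁, fun t ht => (h t ht).2⟩)⟩
  by_cases h₂ : ∃ t ∈ Ici t₀, 0 ≤ p t ∧ q t ≤ 0
  · obtain ⟨t₁, ht₁, hp, hq⟩ := h₂
    have h := S.neg.quadrant_invariant hb hc ht₁ (neg_nonpos.2 hp) (neg_nonneg.2 hq)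
    exact ⟨.inl (eventually_atTop.2 ⟨t₁, fun t ht => neg_nonpos.1 (h t ht).1⟩),
      .inr (eventually_atTop.2 ⟨t₁, fun t ht => neg_nonneg.1 (h t ht).2⟩)⟩
  -- otherwise `p` never vanishes and `q` has the sign of `p`
  push Not at h₁ h₂
  have hne : ∀ t ∈ Ici t₀, p t ≠ 0 := fun t ht h => (h₁ t ht h.le).not_gt (h₂ t ht h.ge)
  rcases le_total 0 (p t₀) with h | h
  · have hp := nonneg_of_continuousOn_Ici_of_ne_zero S.continuousOn_fst hne h
    exact ⟨.inl (eventually_atTop.2 ⟨t₀, hp⟩),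
      .inl (eventually_atTop.2 ⟨t₀, fun t ht => (h₂ t ht (hp t ht)).le⟩)⟩
  · have hp := nonneg_of_continuousOn_Ici_of_ne_zero S.neg.continuousOn_fst
      (fun t ht => neg_ne_zero.2 (hne t ht)) (neg_nonneg.2 h)
    exact ⟨.inr (eventually_atTop.2 ⟨t₀, fun t ht => neg_nonneg.1 (hp t ht)⟩),
      .inr (eventually_atTop.2 ⟨t₀, fun t ht => (h₁ t ht (neg_nonneg.1 (hp t ht))).le⟩)⟩

end IsLinearSolution

section LotkaVolterra

variable {α β δ : ℝ} {x y : ℝ → ℝ}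

theorem lotkaVolterra_sign_eq
    (hx : ∀ t ∈ Ici (0 : ℝ), HasDerivWithinAt x (x t * (1 - x t - α * y t)) (Ici 0) t)
    (hy : ∀ t ∈ Ici (0 : ℝ), HasDerivWithinAt y (δ * y t * (1 - y t - β * x t)) (Ici 0) t) :
    ∀ t ∈ Ici (0 : ℝ), SignType.sign (x t) = SignType.sign (x 0) ∧
      SignType.sign (y t) = SignType.sign (y 0) := by
  have hxc : ContinuousOn x (Ici 0) := fun t ht => (hx t ht).continuousWithinAt
  have hyc : ContinuousOn y (Ici 0) := fun t ht => (hy t ht).continuousWithinAt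
  exact fun t ht => ⟨sign_eq_sign_of_hasDerivWithinAt_mul
      ((continuousOn_const.sub hxc).sub (continuousOn_const.mul hyc)) hx t ht,
    sign_eq_sign_of_hasDerivWithinAt_mul (c := fun t => δ * (1 - y t - β * x t))
      (continuousOn_const.mul ((continuousOn_const.sub hyc).sub (continuousOn_const.mul hxc)))
      (fun t ht => (hy t ht).congr_deriv (by ring)) t ht⟩

theorem lotkaVolterra_nonneg
    (hx : ∀ t ∈ Ici (0 : ℝ), HasDerivWithinAt x (x t * (1 - x t - α * y t)) (Ici 0) t)
    (hy : ∀ t ∈ Ici (0 : ℝ), HasDerivWithinAt y (δ * y t * (1 - y t - β * x t)) (Ici 0) t)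
    (hx0 : 0 ≤ x 0) (hy0 : 0 ≤ y 0) : ∀ t ∈ Ici (0 : ℝ), 0 ≤ x t ∧ 0 ≤ y t := fun t ht =>
  ⟨sign_nonneg_iff.1 ((lotkaVolterra_sign_eq hx hy t ht).1 ▸ sign_nonneg_iff.2 hx0),
    sign_nonneg_iff.1 ((lotkaVolterra_sign_eq hx hy t ht).2 ▸ sign_nonneg_iff.2 hy0)⟩

theorem lotkaVolterra_isLinearSolution
    (hx : ∀ t ∈ Ici (0 : ℝ), HasDerivWithinAt x (x t * (1 - x t - α * y t)) (Ici 0) t)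
    (hy : ∀ t ∈ Ici (0 : ℝ), HasDerivWithinAt y (δ * y t * (1 - y t - β * x t)) (Ici 0) t) :
    IsLinearSolution (fun t => -x t) (fun t => -(α * δ * y t)) (fun t => -(β * x t))
      (fun t => -(δ * y t)) (fun t => 1 - x t - α * y t) (fun t => 1 - y t - β * x t) 0 := by
  have hxc : ContinuousOn x (Ici 0) := fun t ht => (hx t ht).continuousWithinAt
  have hyc : ContinuousOn y (Ici 0) := fun t ht => (hy t ht).continuousWithinAt
  refine ⟨fun t ht => ?_, fun t ht => ?_, hxc.neg, (continuousOn_const.mul hyc).neg,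
    (continuousOn_const.mul hxc).neg, (continuousOn_const.mul hyc).neg⟩
  · exact (((hasDerivWithinAt_const t _ 1).sub (hx t ht)).sub
      ((hy t ht).const_mul α)).congr_deriv (by ring)
  · exact (((hasDerivWithinAt_const t _ 1).sub (hy t ht)).sub
      ((hx t ht).const_mul β)).congr_deriv (by ring)

theorem lotkaVolterra_eventuallyConstSign (hα : 0 < α) (hβ : 0 < β) (hδ : 0 < δ)
    (hx : ∀ t ∈ Ici (0 : ℝ), HasDerivWithinAt x (x t * (1 - x t - α * y t)) (Ici 0) t)
    (hy : ∀ t ∈ Ici (0 : ℝ), HasDerivWithinAt y (δ * y t * (1 - y t - β * x t)) (Ici 0) t)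
    (hx0 : 0 ≤ x 0) (hy0 : 0 ≤ y 0) :
    EventuallyConstSign (fun t => x t * (1 - x t - α * y t)) ∧
      EventuallyConstSign (fun t => δ * y t * (1 - y t - β * x t)) := by
  have hsign := lotkaVolterra_sign_eq hx hy
  have hnn := lotkaVolterra_nonneg hx hy hx0 hy0
  have S := lotkaVolterra_isLinearSolution hx hy
  have hx_ev : ∀ᶠ t in atTop, 0 ≤ x t := eventually_atTop.2 ⟨0, fun t ht => (hnn t ht).1⟩
  have hy_ev : ∀ᶠ t in atTop, 0 ≤ δ * y t :=
    eventually_atTop.2 ⟨0, fun t ht => mul_nonneg hδ.le (hnn t ht).2⟩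
  rcases hx0.eq_or_lt with hx0 | hx0_pos
  · have hx_zero : ∀ t ∈ Ici (0 : ℝ), x t = 0 := fun t ht =>
      sign_eq_zero_iff.1 ((hsign t ht).1.trans (hx0 ▸ sign_zero))
    refine ⟨.inl (eventually_atTop.2 ⟨0, fun t ht => by simp [hx_zero t ht]⟩),
      (eventuallyConstSign_of_hasDerivWithinAt_mul (c := fun t => -(δ * y t))
        S.continuousOn_e
        fun t ht => (S.hasDerivWithinAt_snd t ht).congr_deriv ?_).mul_left hy_ev⟩
    rw [hx_zero t ht]
    ring
  rcases hy0.eq_or_lt with hy0 | hy0_pos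
  · have hy_zero : ∀ t ∈ Ici (0 : ℝ), y t = 0 := fun t ht =>
      sign_eq_zero_iff.1 ((hsign t ht).2.trans (hy0 ▸ sign_zero))
    refine ⟨(eventuallyConstSign_of_hasDerivWithinAt_mul (c := fun t => -x t) S.continuousOn_a
        fun t ht => (S.hasDerivWithinAt_fst t ht).congr_deriv ?_).mul_left hx_ev,
      .inl (eventually_atTop.2 ⟨0, fun t ht => by simp [hy_zero t ht]⟩)⟩
    rw [hy_zero t ht]
    ring
  have hx_pos : ∀ t ∈ Ici (0 : ℝ), 0 < x t := fun t ht =>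
    sign_eq_one_iff.1 ((hsign t ht).1.trans (sign_pos hx0_pos))
  have hy_pos : ∀ t ∈ Ici (0 : ℝ), 0 < y t := fun t ht =>
    sign_eq_one_iff.1 ((hsign t ht).2.trans (sign_pos hy0_pos))
  obtain ⟨hf_sign, hg_sign⟩ := S.eventuallyConstSign
    (fun t ht => neg_neg_of_pos (by have := hy_pos t ht; positivity))
    (fun t ht => neg_neg_of_pos (by have := hx_pos t ht; positivity))
  exact ⟨hf_sign.mul_left hx_ev, hg_sign.mul_left hy_ev⟩

theorem lotkaVolterra_equilibria {X Y : ℝ} (hαβ : α * β ≠ 1) (hδ : δ ≠ 0)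
    (hX : X * (1 - X - α * Y) = 0) (hY : δ * Y * (1 - Y - β * X) = 0) :
    (X, Y) = (0, 0) ∨ (X, Y) = (1, 0) ∨ (X, Y) = (0, 1) ∨
      (X, Y) = ((α - 1) / (α * β - 1), (β - 1) / (α * β - 1)) := by
  have hαβ' : α * β - 1 ≠ 0 := sub_ne_zero.2 hαβ
  simp only [mul_eq_zero, hδ, false_or] at hX hY
  rcases hX with rfl | hX <;> rcases hY with rfl | hY
  · exact .inl rfl
  · exact .inr (.inr (.inl (Prod.ext rfl (show Y = 1 by linarith))))
  · exact .inr (.inl (Prod.ext (show X = 1 by linarith) rfl))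
  · refine .inr (.inr (.inr (Prod.ext ?_ ?_))) <;> dsimp only <;> rw [eq_div_iff hαβ']
    · linear_combination hX - α * hY
    · linear_combination hY - β * hX

end LotkaVolterra

/-- Every forward solution of the Lotka–Volterra competition system starting
in the first quadrant converges to one of the four equilibrium points. -/
theorem stmt_4 (α β δ : ℝ) (hα : 1 < α) (hβ : 1 < β) (hδ : 0 < δ)
    (A B : ℝ) (hA : A = (α - 1) / (α * β - 1)) (hB : B = (β - 1) / (α * β - 1))
    (x y : ℝ → ℝ)
    (hx : ∀ t ∈ Set.Ici (0 : ℝ),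
      HasDerivWithinAt x (x t * (1 - x t - α * y t)) (Set.Ici 0) t)
    (hy : ∀ t ∈ Set.Ici (0 : ℝ),
      HasDerivWithinAt y (δ * y t * (1 - y t - β * x t)) (Set.Ici 0) t)
    (hx0 : 0 ≤ x 0) (hy0 : 0 ≤ y 0) :
    Tendsto (fun t => (x t, y t)) atTop (nhds ((0 : ℝ), (0 : ℝ))) ∨
    Tendsto (fun t => (x t, y t)) atTop (nhds ((1 : ℝ), (0 : ℝ))) ∨
    Tendsto (fun t => (x t, y t)) atTop (nhds ((0 : ℝ), (1 : ℝ))) ∨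
    Tendsto (fun t => (x t, y t)) atTop (nhds (A, B)) := by
  have hα₀ : 0 < α := by linarith
  have hβ₀ : 0 < β := by linarith
  have hnn := lotkaVolterra_nonneg hx hy hx0 hy0
  have hx_le := le_max_of_deriv_neg_of_lt (K := 1) hx fun t ht h =>
    mul_neg_of_pos_of_neg (by linarith) (by nlinarith [(hnn t ht).2])
  have hy_le := le_max_of_deriv_neg_of_lt (K := 1) hy fun t ht h =>
    mul_neg_of_pos_of_neg (by nlinarith) (by nlinarith [(hnn t ht).1])
  obtain ⟨hx_sign, hy_sign⟩ := lotkaVolterra_eventuallyConstSign hα₀ hβ₀ hδ hx hy hx0 hy0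
  obtain ⟨X, hX⟩ := exists_tendsto_of_eventuallyConstSign_deriv hx (fun t ht => (hnn t ht).1)
    hx_le hx_sign
  obtain ⟨Y, hY⟩ := exists_tendsto_of_eventuallyConstSign_deriv hy (fun t ht => (hnn t ht).2)
    hy_le hy_sign
  have hX₀ := eq_zero_of_tendsto_of_hasDerivWithinAt hx hX
    (hX.mul ((tendsto_const_nhds.sub hX).sub (hY.const_mul α)))
  have hY₀ := eq_zero_of_tendsto_of_hasDerivWithinAt hy hY
    ((hY.const_mul δ).mul ((tendsto_const_nhds.sub hY).sub (hX.const_mul β)))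
  have hXY := hX.prodMk_nhds hY
  subst hA hB
  rcases lotkaVolterra_equilibria (by nlinarith) hδ.ne' hX₀ hY₀ with h | h | h | h <;>
    rw [h] at hXY <;> simp only [hXY, true_or, or_true]
end

section
/- Let α>1, β>1, δ>0, A=(α-1)/(αβ-1), B=(β-1)/(αβ-1), and let K_L=(0,A)×(0,B) and K_R=(A,∞)×(B,∞) be open rectangles. If (x(t),y(t)) is a solution of the system dx/dt = x(1-x-αy), dy/dt = δy(1-y-βx) on an interval [t₀,T] with (x(T),y(T)) ∈ K_L, then (x(t),y(t)) ∈ K_L for all t ∈ [t₀,T]; the same holds with K_L replaced by K_R. In other words, K_L and K_R are negatively invariant under the flow. -/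
/-!
In `K_L` both species strictly grow and in `K_R` both strictly decline, because the corner
`(A, B)` is the coexistence equilibrium: `A + α B = 1` and `B + β A = 1`. Follow a solution
backwards from `T` to the last time `s` it was outside the rectangle. On `(s, T]` it is inside,
so in `K_R` both coordinates are larger at `s` than at `T`, which puts `(x s, y s)` back in `K_R`.
In `K_L` both are smaller, so `(x s, y s)`, lying in the closure of `K_L` but not in `K_L`, is on
a coordinate axis. The axes are invariant, since `x' = g x` with `g` bounded, so Grönwall's
inequality would force `x T = 0` (or `y T = 0`).
-/

open Set

theorem ContinuousOn.forall_mem_of_no_lastExit {X : Type*} [TopologicalSpace X]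
    {γ : ℝ → X} {U : Set X} {a b : ℝ} (hγ : ContinuousOn γ (Icc a b)) (hU : IsOpen U) (hb : γ b ∈ U)
    (hstep : ∀ s ∈ Ico a b, γ s ∈ closure U → (∀ u ∈ Ioc s b, γ u ∈ U) → γ s ∈ U) :
    ∀ t ∈ Icc a b, γ t ∈ U := by
  by_contra! ⟨t, ht, htU⟩
  set S := Icc a b ∩ γ ⁻¹' Uᶜ
  have hS : IsClosed S := hγ.preimage_isClosed_of_isClosed isClosed_Icc hU.isClosed_compl
  have hSbdd : BddAbove S := ⟨b, fun u hu => hu.1.2⟩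
  set s := sSup S
  have hsS : s ∈ S := hS.csSup_mem ⟨t, ht, htU⟩ hSbdd
  have hsb : s < b := hsS.1.2.lt_of_ne fun h => hsS.2 (h ▸ hb)
  have hafter : ∀ u ∈ Ioc s b, γ u ∈ U := fun u hu => by_contra fun h =>
    (le_csSup hSbdd ⟨⟨hsS.1.1.trans hu.1.le, hu.2⟩, h⟩).not_gt hu.1
  have hcl : γ s ∈ closure U := by
    have hγs : ContinuousWithinAt γ (Ioc s b) s :=
      (hγ s hsS.1).mono (Ioc_subset_Icc_self.trans (Icc_subset_Icc_left hsS.1.1))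
    refine closure_mono (image_subset_iff.2 hafter) (hγs.mem_closure_image ?_)
    rw [closure_Ioc hsb.ne]
    exact left_mem_Icc.2 hsb.le
  exact hsS.2 (hstep s ⟨hsS.1.1, hsb⟩ hcl hafter)

theorem eq_zero_of_hasDerivWithinAt_smul_self {E : Type*} [NormedAddCommGroup E]
    [NormedSpace ℝ E] {f : ℝ → E} {g : ℝ → ℝ} {a b : ℝ} (hg : ContinuousOn g (Icc a b))
    (hf : ∀ t ∈ Icc a b, HasDerivWithinAt f (g t • f t) (Icc a b) t) (ha : f a = 0) :
    ∀ t ∈ Icc a b, f t = 0 := by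
  obtain ⟨K, hK⟩ := isCompact_Icc.exists_bound_of_continuousOn hg
  refine eq_zero_of_abs_deriv_le_mul_abs_self_of_eq_zero_right
    (f' := fun t => g t • f t) (K := K)
    (fun t ht => (hf t ht).continuousWithinAt) (fun t ht => ?_) ha (fun t ht => ?_)
  · exact (hf t (Ico_subset_Icc_self ht)).mono_of_mem_nhdsWithin
      (Filter.mem_of_superset (Icc_mem_nhdsGE ht.2) (Icc_subset_Icc_left ht.1))
  · rw [norm_smul]
    exact mul_le_mul_of_nonneg_right (hK t (Ico_subset_Icc_self ht)) (norm_nonneg _)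

theorem strictMonoOn_Icc_of_hasDerivWithinAt_pos {f f' : ℝ → ℝ} {a b : ℝ}
    (hf : ∀ t ∈ Icc a b, HasDerivWithinAt f (f' t) (Icc a b) t)
    (hpos : ∀ t ∈ Ioo a b, 0 < f' t) : StrictMonoOn f (Icc a b) :=
  strictMonoOn_of_hasDerivWithinAt_pos (convex_Icc a b)
    (fun t ht => (hf t ht).continuousWithinAt)
    (fun t ht => (hf t (interior_subset ht)).mono interior_subset)
    (by rwa [interior_Icc])

theorem strictAntiOn_Icc_of_hasDerivWithinAt_neg {f f' : ℝ → ℝ} {a b : ℝ}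
    (hf : ∀ t ∈ Icc a b, HasDerivWithinAt f (f' t) (Icc a b) t)
    (hneg : ∀ t ∈ Ioo a b, f' t < 0) : StrictAntiOn f (Icc a b) :=
  strictAntiOn_of_hasDerivWithinAt_neg (convex_Icc a b)
    (fun t ht => (hf t ht).continuousWithinAt)
    (fun t ht => (hf t (interior_subset ht)).mono interior_subset)
    (by rwa [interior_Icc])

section Competition

variable {p q c u v : ℝ}

theorem mul_one_sub_sub_mul_pos (hc : 0 ≤ c) (hpq : p + c * q = 1) (hu : 0 < u) (hup : u < p)
    (hvq : v < q) : 0 < u * (1 - u - c * v) :=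
  mul_pos hu (by nlinarith [mul_le_mul_of_nonneg_left hvq.le hc])

theorem mul_one_sub_sub_mul_neg (hc : 0 ≤ c) (hpq : p + c * q = 1) (hp : 0 < p) (hpu : p < u)
    (hqv : q < v) : u * (1 - u - c * v) < 0 :=
  mul_neg_of_pos_of_neg (hp.trans hpu) (by nlinarith [mul_le_mul_of_nonneg_left hqv.le hc])

end Competition

section LotkaVolterra

variable {α β δ A B s T : ℝ} {x y : ℝ → ℝ}

theorem lotkaVolterra_mem_Ioi_prod_of_forall_Ioc (hα : 0 ≤ α) (hβ : 0 ≤ β) (hδ : 0 < δ)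
    (hA : 0 < A) (hB : 0 < B) (hxA : A + α * B = 1) (hyB : B + β * A = 1) (hsT : s < T)
    (hx : ∀ t ∈ Icc s T, HasDerivWithinAt x (x t * (1 - x t - α * y t)) (Icc s T) t)
    (hy : ∀ t ∈ Icc s T, HasDerivWithinAt y (δ * y t * (1 - y t - β * x t)) (Icc s T) t)
    (hafter : ∀ t ∈ Ioc s T, (x t, y t) ∈ Ioi A ×ˢ Ioi B) :
    (x s, y s) ∈ Ioi A ×ˢ Ioi B := by
  have hin t (ht : t ∈ Ioo s T) := hafter t (Ioo_subset_Ioc_self ht)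
  have hxanti := strictAntiOn_Icc_of_hasDerivWithinAt_neg hx fun t ht =>
    mul_one_sub_sub_mul_neg hα hxA hA (hin t ht).1 (hin t ht).2
  have hyanti := strictAntiOn_Icc_of_hasDerivWithinAt_neg hy fun t ht => by
    rw [mul_assoc]
    exact mul_neg_of_pos_of_neg hδ (mul_one_sub_sub_mul_neg hβ hyB hB (hin t ht).2 (hin t ht).1)
  have hs : s ∈ Icc s T := left_mem_Icc.2 hsT.le
  have hT : T ∈ Icc s T := right_mem_Icc.2 hsT.le
  obtain ⟨hxT, hyT⟩ := hafter T (right_mem_Ioc.2 hsT)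
  exact ⟨hxT.trans (hxanti hs hT hsT), hyT.trans (hyanti hs hT hsT)⟩

theorem lotkaVolterra_mem_Ioo_prod_of_forall_Ioc (hα : 0 ≤ α) (hβ : 0 ≤ β) (hδ : 0 < δ)
    (hA : 0 < A) (hB : 0 < B) (hxA : A + α * B = 1) (hyB : B + β * A = 1) (hsT : s < T)
    (hx : ∀ t ∈ Icc s T, HasDerivWithinAt x (x t * (1 - x t - α * y t)) (Icc s T) t)
    (hy : ∀ t ∈ Icc s T, HasDerivWithinAt y (δ * y t * (1 - y t - β * x t)) (Icc s T) t)
    (hcl : (x s, y s) ∈ closure (Ioo 0 A ×ˢ Ioo 0 B))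
    (hafter : ∀ t ∈ Ioc s T, (x t, y t) ∈ Ioo 0 A ×ˢ Ioo 0 B) :
    (x s, y s) ∈ Ioo 0 A ×ˢ Ioo 0 B := by
  rw [closure_prod_eq, closure_Ioo hA.ne, closure_Ioo hB.ne] at hcl
  have hin t (ht : t ∈ Ioo s T) := hafter t (Ioo_subset_Ioc_self ht)
  have hxmono := strictMonoOn_Icc_of_hasDerivWithinAt_pos hx fun t ht =>
    mul_one_sub_sub_mul_pos hα hxA (hin t ht).1.1 (hin t ht).1.2 (hin t ht).2.2
  have hymono := strictMonoOn_Icc_of_hasDerivWithinAt_pos hy fun t ht => by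
    rw [mul_assoc]
    exact mul_pos hδ (mul_one_sub_sub_mul_pos hβ hyB (hin t ht).2.1 (hin t ht).2.2 (hin t ht).1.2)
  have hxc : ContinuousOn x (Icc s T) := fun t ht => (hx t ht).continuousWithinAt
  have hyc : ContinuousOn y (Icc s T) := fun t ht => (hy t ht).continuousWithinAt
  have hs : s ∈ Icc s T := left_mem_Icc.2 hsT.le
  have hT : T ∈ Icc s T := right_mem_Icc.2 hsT.le
  obtain ⟨⟨hxT0, hxTA⟩, ⟨hyT0, hyTB⟩⟩ := hafter T (right_mem_Ioc.2 hsT)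
  have hxs0 : x s ≠ 0 := fun h => hxT0.ne' <|
    eq_zero_of_hasDerivWithinAt_smul_self (g := fun t => 1 - x t - α * y t) (by fun_prop)
      (fun t ht => (hx t ht).congr_deriv (mul_comm _ _)) h T hT
  have hys0 : y s ≠ 0 := fun h => hyT0.ne' <|
    eq_zero_of_hasDerivWithinAt_smul_self (g := fun t => δ * (1 - y t - β * x t)) (by fun_prop)
      (fun t ht => (hy t ht).congr_deriv (by simp only [smul_eq_mul]; ring)) h T hT
  exact ⟨⟨hcl.1.1.lt_of_ne' hxs0, (hxmono hs hT hsT).trans hxTA⟩,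
    ⟨hcl.2.1.lt_of_ne' hys0, (hymono hs hT hsT).trans hyTB⟩⟩

end LotkaVolterra

theorem stmt_5_general (α β δ : ℝ) (hα : 1 < α) (hβ : 1 < β) (hδ : 0 < δ)
    (A B : ℝ) (hA : A = (α - 1) / (α * β - 1)) (hB : B = (β - 1) / (α * β - 1))
    (t₀ T : ℝ) (x y : ℝ → ℝ)
    (hx : ∀ t ∈ Set.Icc t₀ T,
      HasDerivWithinAt x (x t * (1 - x t - α * y t)) (Set.Icc t₀ T) t)
    (hy : ∀ t ∈ Set.Icc t₀ T,
      HasDerivWithinAt y (δ * y t * (1 - y t - β * x t)) (Set.Icc t₀ T) t) :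
    ((x T, y T) ∈ Set.Ioo 0 A ×ˢ Set.Ioo 0 B →
      ∀ t ∈ Set.Icc t₀ T, (x t, y t) ∈ Set.Ioo 0 A ×ˢ Set.Ioo 0 B) ∧
    ((x T, y T) ∈ Set.Ioi A ×ˢ Set.Ioi B →
      ∀ t ∈ Set.Icc t₀ T, (x t, y t) ∈ Set.Ioi A ×ˢ Set.Ioi B) := by
  have hαβ : 0 < α * β - 1 := by nlinarith
  have hA0 : 0 < A := hA ▸ div_pos (by linarith) hαβ
  have hB0 : 0 < B := hB ▸ div_pos (by linarith) hαβ
  have hxA : A + α * B = 1 := by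
    rw [hA, hB, mul_div_assoc', ← add_div, div_eq_one_iff_eq hαβ.ne']; ring
  have hyB : B + β * A = 1 := by
    rw [hA, hB, mul_div_assoc', ← add_div, div_eq_one_iff_eq hαβ.ne']; ring
  have hγ : ContinuousOn (fun t => (x t, y t)) (Icc t₀ T) := fun t ht =>
    (hx t ht).continuousWithinAt.prodMk (hy t ht).continuousWithinAt
  have hsub {s} (hs : s ∈ Ico t₀ T) : Icc s T ⊆ Icc t₀ T := Icc_subset_Icc_left hs.1
  refine ⟨fun hT => hγ.forall_mem_of_no_lastExit (isOpen_Ioo.prod isOpen_Ioo) hT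
      fun s hs hcl hafter => ?_,
    fun hT => hγ.forall_mem_of_no_lastExit (isOpen_Ioi.prod isOpen_Ioi) hT
      fun s hs _ hafter => ?_⟩
  · exact lotkaVolterra_mem_Ioo_prod_of_forall_Ioc (by linarith) (by linarith) hδ hA0 hB0 hxA hyB
      hs.2 (fun t ht => (hx t (hsub hs ht)).mono (hsub hs))
      (fun t ht => (hy t (hsub hs ht)).mono (hsub hs)) hcl hafter
  · exact lotkaVolterra_mem_Ioi_prod_of_forall_Ioc (by linarith) (by linarith) hδ hA0 hB0 hxA hyB
      hs.2 (fun t ht => (hx t (hsub hs ht)).mono (hsub hs))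
      (fun t ht => (hy t (hsub hs ht)).mono (hsub hs)) hafter

/-- Negative invariance of the rectangles `K_L = (0,A)×(0,B)` and
`K_R = (A,∞)×(B,∞)` under the flow of the Lotka–Volterra competition system:
if a solution on `[t₀,T]` ends in the rectangle, it stays in it on all of
`[t₀,T]`. -/
theorem stmt_5 (α β δ : ℝ) (hα : 1 < α) (hβ : 1 < β) (hδ : 0 < δ)
    (A B : ℝ) (hA : A = (α - 1) / (α * β - 1)) (hB : B = (β - 1) / (α * β - 1))
    (t₀ T : ℝ) (ht : t₀ ≤ T) (x y : ℝ → ℝ)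
    (hx : ∀ t ∈ Set.Icc t₀ T,
      HasDerivWithinAt x (x t * (1 - x t - α * y t)) (Set.Icc t₀ T) t)
    (hy : ∀ t ∈ Set.Icc t₀ T,
      HasDerivWithinAt y (δ * y t * (1 - y t - β * x t)) (Set.Icc t₀ T) t) :
    ((x T, y T) ∈ Set.Ioo 0 A ×ˢ Set.Ioo 0 B →
      ∀ t ∈ Set.Icc t₀ T, (x t, y t) ∈ Set.Ioo 0 A ×ˢ Set.Ioo 0 B) ∧
    ((x T, y T) ∈ Set.Ioi A ×ˢ Set.Ioi B →
      ∀ t ∈ Set.Icc t₀ T, (x t, y t) ∈ Set.Ioi A ×ˢ Set.Ioi B) :=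
  stmt_5_general α β δ hα hβ hδ A B hA hB t₀ T x y hx hy
end

section
/- Let α>1, β>1, δ>0, A=(α-1)/(αβ-1), B=(β-1)/(αβ-1). If (x(t),y(t)) is a solution of the system dx/dt = x(1-x-αy), dy/dt = δy(1-y-βx) defined on all of ℝ such that 0<x(0)<A, 0<y(0)<B, and (x(t),y(t))→(A,B) as t→∞, then (x(t),y(t))→(0,0) as t→-∞; that is, the left branch of the stable manifold of the saddle (A,B) is a heteroclinic connection from (0,0) to (A,B). -/
/-!
Solutions of the competition system stay positive, and inside the rectangle `(0,A) × (0,B)`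
both per-capita growth rates `1 - x - α y` and `1 - y - β x` are positive, because the
rectangle's corner `(A,B)` lies on both nullclines. Hence `x` and `y` increase inside it, so
going backwards in time the solution can never leave it through the top or right edges; it
decreases monotonically to a limit `(L,M)` which must be an equilibrium in `[0,A) × [0,B)`,
and the only such equilibrium is the origin.
-/

open Filter Set Topology

theorem eq_mul_exp_integral_of_hasDerivAt_mul {x g : ℝ → ℝ} (hg : Continuous g)
    (hx : ∀ t, HasDerivAt x (x t * g t) t) (t : ℝ) :
    x t = x 0 * Real.exp (∫ s in (0 : ℝ)..t, g s) := by
  set G : ℝ → ℝ := fun t => ∫ s in (0 : ℝ)..t, g s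
  have hG : ∀ t, HasDerivAt G (g t) t := fun t => (hg.integral_hasStrictDerivAt 0 t).hasDerivAt
  have hconst : ∀ t, HasDerivAt (fun t => x t * Real.exp (-G t)) 0 t := fun t =>
    ((hx t).mul (hG t).neg.exp).congr_deriv (by ring)
  have := is_const_of_deriv_eq_zero (fun t => (hconst t).differentiableAt)
    (fun t => (hconst t).deriv) t 0
  simp only [G, intervalIntegral.integral_same, neg_zero, Real.exp_zero, mul_one] at this
  rw [← this, mul_assoc, ← Real.exp_add, neg_add_cancel, Real.exp_zero, mul_one]

theorem pos_of_hasDerivAt_mul {x g : ℝ → ℝ} (hg : Continuous g)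
    (hx : ∀ t, HasDerivAt x (x t * g t) t) (h0 : 0 < x 0) (t : ℝ) : 0 < x t := by
  rw [eq_mul_exp_integral_of_hasDerivAt_mul hg hx t]
  positivity

theorem Iic_subset_preimage_of_forall_Ioc_subset {X : Type*} [TopologicalSpace X] {u : ℝ → X}
    (hu : Continuous u) {U : Set X} (hU : IsOpen U) {a : ℝ} (ha : u a ∈ U)
    (hstep : ∀ τ < a, Ioc τ a ⊆ u ⁻¹' U → u τ ∈ U) : Iic a ⊆ u ⁻¹' U := by
  by_contra hsub
  set bad := Iic a ∩ (u ⁻¹' U)ᶜ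
  have hne : bad.Nonempty := by
    obtain ⟨t, ht, htU⟩ := not_subset.1 hsub
    exact ⟨t, ht, htU⟩
  have hbdd : BddAbove bad := ⟨a, fun t ht => ht.1⟩
  have hmem : sSup bad ∈ bad :=
    (isClosed_Iic.inter (hU.preimage hu).isClosed_compl).csSup_mem hne hbdd
  have hlt : sSup bad < a := lt_of_le_of_ne hmem.1 fun h => hmem.2 (h ▸ ha)
  refine hmem.2 (hstep _ hlt fun s hs => ?_)
  by_contra hsU
  exact (le_csSup hbdd ⟨hs.2, hsU⟩).not_gt hs.1

theorem MonotoneOn.exists_tendsto_atBot {f : ℝ → ℝ} {a : ℝ} (hf : MonotoneOn f (Iic a))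
    (hbdd : BddBelow (f '' Iic a)) : ∃ L, Tendsto f atBot (𝓝 L) := by
  have hmono : Monotone fun t => f (min t a) := fun s t hst =>
    hf (min_le_right s a) (min_le_right t a) (min_le_min_right a hst)
  have hrange : BddBelow (range fun t => f (min t a)) :=
    hbdd.mono (range_subset_iff.2 fun t => mem_image_of_mem f (min_le_right t a))
  refine ⟨_, (tendsto_atBot_ciInf hmono hrange).congr' ?_⟩
  filter_upwards [eventually_le_atBot a] with t ht
  rw [min_eq_left ht]

theorem eq_zero_of_tendsto_of_tendsto_deriv_atBot {f f' : ℝ → ℝ} {L c : ℝ}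
    (hf : ∀ t, HasDerivAt f (f' t) t) (hL : Tendsto f atBot (𝓝 L))
    (hc : Tendsto f' atBot (𝓝 c)) : c = 0 := by
  have hmvt : ∀ t, ∃ ξ ∈ Ioo (t - 1) t, f' ξ = f t - f (t - 1) := fun t => by
    obtain ⟨ξ, hξ, h⟩ := exists_hasDerivAt_eq_slope f f' (sub_one_lt t)
      (fun s _ => (hf s).continuousAt.continuousWithinAt) fun s _ => hf s
    exact ⟨ξ, hξ, by rw [h, sub_sub_cancel, div_one]⟩
  choose ξ hξ hξeq using hmvt
  have hξbot : Tendsto ξ atBot atBot := tendsto_atBot_mono (fun t => (hξ t).2.le) tendsto_id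
  have hdiff : Tendsto (fun t => f t - f (t - 1)) atBot (𝓝 (L - L)) :=
    hL.sub (hL.comp (tendsto_atBot_add_const_right _ (-1) tendsto_id))
  rw [sub_self] at hdiff
  exact tendsto_nhds_unique ((hc.comp hξbot).congr hξeq) hdiff

theorem one_sub_sub_mul_pos {a b c A B : ℝ} (hc : 0 ≤ c) (hAB : A + c * B ≤ 1) (ha : a < A)
    (hb : b ≤ B) : 0 < 1 - a - c * b := by
  nlinarith [mul_le_mul_of_nonneg_left hb hc]

section Competition

variable {α β δ A B : ℝ} {x y : ℝ → ℝ}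

theorem competition_pos (hx : ∀ t, HasDerivAt x (x t * (1 - x t - α * y t)) t)
    (hy : ∀ t, HasDerivAt y (δ * y t * (1 - y t - β * x t)) t) (hx0 : 0 < x 0) (hy0 : 0 < y 0)
    (t : ℝ) : 0 < x t ∧ 0 < y t := by
  have hxc : Continuous x := Differentiable.continuous fun t => (hx t).differentiableAt
  have hyc : Continuous y := Differentiable.continuous fun t => (hy t).differentiableAt
  refine ⟨pos_of_hasDerivAt_mul (by fun_prop) hx hx0 t,
    pos_of_hasDerivAt_mul (g := fun t => δ * (1 - y t - β * x t)) (by fun_prop) (fun t => ?_) hy0 t⟩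
  exact (hy t).congr_deriv (by ring)

theorem competition_strictMonoOn (hα : 0 ≤ α) (hβ : 0 ≤ β) (hδ : 0 < δ)
    (hAB : A + α * B ≤ 1) (hBA : B + β * A ≤ 1)
    (hx : ∀ t, HasDerivAt x (x t * (1 - x t - α * y t)) t)
    (hy : ∀ t, HasDerivAt y (δ * y t * (1 - y t - β * x t)) t)
    (hpos : ∀ t, 0 < x t ∧ 0 < y t) {s : Set ℝ} (hs : Convex ℝ s)
    (hrect : ∀ t ∈ interior s, x t < A ∧ y t < B) : StrictMonoOn x s ∧ StrictMonoOn y s := by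
  constructor
  · refine strictMonoOn_of_hasDerivWithinAt_pos hs
      (fun t _ => (hx t).continuousAt.continuousWithinAt) (fun t _ => (hx t).hasDerivWithinAt)
      fun t ht => mul_pos (hpos t).1 ?_
    exact one_sub_sub_mul_pos hα hAB (hrect t ht).1 (hrect t ht).2.le
  · refine strictMonoOn_of_hasDerivWithinAt_pos hs
      (fun t _ => (hy t).continuousAt.continuousWithinAt) (fun t _ => (hy t).hasDerivWithinAt)
      fun t ht => mul_pos (mul_pos hδ (hpos t).2) ?_
    exact one_sub_sub_mul_pos hβ hBA (hrect t ht).2 (hrect t ht).1.le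

theorem competition_lt_of_le_zero (hα : 0 ≤ α) (hβ : 0 ≤ β) (hδ : 0 < δ)
    (hAB : A + α * B ≤ 1) (hBA : B + β * A ≤ 1)
    (hx : ∀ t, HasDerivAt x (x t * (1 - x t - α * y t)) t)
    (hy : ∀ t, HasDerivAt y (δ * y t * (1 - y t - β * x t)) t)
    (hpos : ∀ t, 0 < x t ∧ 0 < y t) (hxA : x 0 < A) (hyB : y 0 < B) :
    ∀ t ≤ 0, x t < A ∧ y t < B := by
  have hxc : Continuous x := Differentiable.continuous fun t => (hx t).differentiableAt
  have hyc : Continuous y := Differentiable.continuous fun t => (hy t).differentiableAt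
  refine Iic_subset_preimage_of_forall_Ioc_subset (u := fun t => (x t, y t)) (by fun_prop)
    ((isOpen_lt continuous_fst continuous_const).inter (isOpen_lt continuous_snd continuous_const))
    ⟨hxA, hyB⟩ fun τ hτ hrect => ?_
  have hmono := competition_strictMonoOn hα hβ hδ hAB hBA hx hy hpos (convex_Icc τ 0)
    fun t ht => hrect (Ioo_subset_Ioc_self (by rwa [interior_Icc] at ht))
  have hτmem : τ ∈ Icc τ 0 := left_mem_Icc.2 hτ.le
  have h0mem : (0 : ℝ) ∈ Icc τ 0 := right_mem_Icc.2 hτ.le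
  exact ⟨(hmono.1 hτmem h0mem hτ).trans hxA, (hmono.2 hτmem h0mem hτ).trans hyB⟩

theorem competition_tendsto_atBot (hα : 0 ≤ α) (hβ : 0 ≤ β) (hδ : 0 < δ)
    (hAB : A + α * B ≤ 1) (hBA : B + β * A ≤ 1)
    (hx : ∀ t, HasDerivAt x (x t * (1 - x t - α * y t)) t)
    (hy : ∀ t, HasDerivAt y (δ * y t * (1 - y t - β * x t)) t)
    (hx0 : 0 < x 0) (hxA : x 0 < A) (hy0 : 0 < y 0) (hyB : y 0 < B) :
    Tendsto (fun t => (x t, y t)) atBot (𝓝 (0, 0)) := by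
  have hpos := competition_pos hx hy hx0 hy0
  have hmono := competition_strictMonoOn hα hβ hδ hAB hBA hx hy hpos (convex_Iic 0)
    fun t ht => competition_lt_of_le_zero hα hβ hδ hAB hBA hx hy hpos hxA hyB t
      (interior_subset (s := Iic 0) ht)
  obtain ⟨L, hxL⟩ := hmono.1.monotoneOn.exists_tendsto_atBot
    ⟨0, by rintro _ ⟨t, -, rfl⟩; exact (hpos t).1.le⟩
  obtain ⟨M, hyM⟩ := hmono.2.monotoneOn.exists_tendsto_atBot
    ⟨0, by rintro _ ⟨t, -, rfl⟩; exact (hpos t).2.le⟩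
  have hLA : L < A := (le_of_tendsto hxL (eventually_atBot.2 ⟨0, fun t ht =>
    hmono.1.monotoneOn ht self_mem_Iic ht⟩)).trans_lt hxA
  have hMB : M < B := (le_of_tendsto hyM (eventually_atBot.2 ⟨0, fun t ht =>
    hmono.2.monotoneOn ht self_mem_Iic ht⟩)).trans_lt hyB
  have hxeq : L * (1 - L - α * M) = 0 := eq_zero_of_tendsto_of_tendsto_deriv_atBot hx hxL
    (hxL.mul ((tendsto_const_nhds.sub hxL).sub (tendsto_const_nhds.mul hyM)))
  have hyeq : δ * M * (1 - M - β * L) = 0 := eq_zero_of_tendsto_of_tendsto_deriv_atBot hy hyM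
    ((tendsto_const_nhds.mul hyM).mul
      ((tendsto_const_nhds.sub hyM).sub (tendsto_const_nhds.mul hxL)))
  have hL : L = 0 :=
    (mul_eq_zero.1 hxeq).resolve_right (one_sub_sub_mul_pos hα hAB hLA hMB.le).ne'
  have hM : M = 0 :=
    (mul_eq_zero.1 ((mul_eq_zero.1 hyeq).resolve_right
      (one_sub_sub_mul_pos hβ hBA hMB hLA.le).ne')).resolve_left hδ.ne'
  subst hL hM
  exact hxL.prodMk_nhds hyM

end Competition

theorem stmt_7_general (α β δ : ℝ) (hα : 1 < α) (hβ : 1 < β) (hδ : 0 < δ)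
    (A B : ℝ) (hA : A = (α - 1) / (α * β - 1)) (hB : B = (β - 1) / (α * β - 1))
    (x y : ℝ → ℝ)
    (hx : ∀ t, HasDerivAt x (x t * (1 - x t - α * y t)) t)
    (hy : ∀ t, HasDerivAt y (δ * y t * (1 - y t - β * x t)) t)
    (hx0 : 0 < x 0) (hxA : x 0 < A) (hy0 : 0 < y 0) (hyB : y 0 < B) :
    Tendsto (fun t => (x t, y t)) atBot (nhds ((0 : ℝ), (0 : ℝ))) := by
  have hden : 0 < α * β - 1 := by nlinarith
  have hAB : A + α * B = 1 := by
    rw [hA, hB, mul_div_assoc', ← add_div, div_eq_one_iff_eq hden.ne']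
    ring
  have hBA : B + β * A = 1 := by
    rw [hA, hB, mul_div_assoc', ← add_div, div_eq_one_iff_eq hden.ne']
    ring
  exact competition_tendsto_atBot (by linarith) (by linarith) hδ hAB.le hBA.le hx hy hx0 hxA hy0 hyB

/-- The left branch of the stable manifold of the saddle `(A,B)` is a
heteroclinic connection from `(0,0)` to `(A,B)`: a full solution starting in
`(0,A)×(0,B)` which converges to `(A,B)` as `t → ∞` converges to `(0,0)` as
`t → -∞`. -/
theorem stmt_7 (α β δ : ℝ) (hα : 1 < α) (hβ : 1 < β) (hδ : 0 < δ)
    (A B : ℝ) (hA : A = (α - 1) / (α * β - 1)) (hB : B = (β - 1) / (α * β - 1))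
    (x y : ℝ → ℝ)
    (hx : ∀ t, HasDerivAt x (x t * (1 - x t - α * y t)) t)
    (hy : ∀ t, HasDerivAt y (δ * y t * (1 - y t - β * x t)) t)
    (hx0 : 0 < x 0) (hxA : x 0 < A) (hy0 : 0 < y 0) (hyB : y 0 < B)
    (hconv : Tendsto (fun t => (x t, y t)) atTop (nhds (A, B))) :
    Tendsto (fun t => (x t, y t)) atBot (nhds ((0 : ℝ), (0 : ℝ))) :=
  stmt_7_general α β δ hα hβ hδ A B hA hB x y hx hy hx0 hxA hy0 hyB
end

section
/- Let α>1, β>1, δ>0, A=(α-1)/(αβ-1), B=(β-1)/(αβ-1). Let x₀>0 and let y*>0 be such that the solution of the system dx/dt = x(1-x-αy), dy/dt = δy(1-y-βx) on [0,∞) with initial condition (x₀,y*) converges to (A,B) as t→∞. Then: (i) for every y₀ with 0<y₀<y*, the solution with initial condition (x₀,y₀) converges to (1,0) as t→∞; (ii) for every y₀>y*, the solution with initial condition (x₀,y₀) converges to (0,1) as t→∞. -/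
/-!
Solutions with nonnegative data are monotone for the competitive order `x₂ ≤ x₁`, `y₁ ≤ y₂`:
the differences solve a cooperative linear system, whose nonnegative cone is invariant by
Grönwall's inequality applied to the squared negative parts. Every such solution converges to an
equilibrium, since it eventually stays where both nullcline functions `1 - x - α y` and
`1 - y - β x` have a fixed sign, so that both components are eventually monotone.

A solution starting below `(x₀, y⋆)` stays below the solution through `(x₀, y⋆)`, so its limit
has first coordinate at least `A > 0`: it is `(1, 0)` or `(A, B)`. The latter is impossible: near
`(A, B)` a positively weighted sum of the gaps between the two solutions has a nonnegative
derivative, so the gaps cannot tend to `0`. Above `(x₀, y⋆)` the same argument applies with the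
roles of `x` and `y` exchanged.
-/

open Filter Set Topology

theorem le_mul_exp_of_hasDerivWithinAt_le {f f' : ℝ → ℝ} {K a b : ℝ}
    (hf : ContinuousOn f (Icc a b)) (hf' : ∀ t ∈ Ico a b, HasDerivWithinAt f (f' t) (Ici t) t)
    (bound : ∀ t ∈ Ico a b, f' t ≤ K * f t) :
    ∀ t ∈ Icc a b, f t ≤ f a * Real.exp (K * (t - a)) := by
  intro t ht
  rw [← gronwallBound_ε0]
  exact le_gronwallBound_of_liminf_deriv_right_le hf
    (fun s hs _ hr => (hf' s hs).liminf_right_slope_le hr) le_rfl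
    (fun s hs => by simpa using bound s hs) t ht

theorem pos_of_mul_le_hasDerivWithinAt {f f' a : ℝ → ℝ} {t₀ T : ℝ} (hT : t₀ ≤ T)
    (ha : ContinuousOn a (Icc t₀ T)) (hf : ContinuousOn f (Icc t₀ T))
    (hf' : ∀ t ∈ Ico t₀ T, HasDerivWithinAt f (f' t) (Ici t) t)
    (hnn : ∀ t ∈ Ico t₀ T, 0 ≤ f t) (hle : ∀ t ∈ Ico t₀ T, a t * f t ≤ f' t)
    (h₀ : 0 < f t₀) : 0 < f T := by
  obtain ⟨K, hK⟩ := isCompact_Icc.exists_bound_of_continuousOn ha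
  have hlow := le_mul_exp_of_hasDerivWithinAt_le (f := fun t => -f t) (K := -K) hf.neg
    (fun t ht => (hf' t ht).neg) (fun t ht => by
      have := (abs_le.1 (hK t (Ico_subset_Icc_self ht))).1
      nlinarith [hle t ht, hnn t ht]) T ⟨hT, le_rfl⟩
  nlinarith [mul_pos h₀ (Real.exp_pos (-K * (T - t₀)))]

theorem monotoneOn_Ici_of_hasDerivWithinAt {f f' : ℝ → ℝ} {a : ℝ}
    (hf : ∀ t ∈ Ici a, HasDerivWithinAt f (f' t) (Ici a) t) (hf' : ∀ t ∈ Ioi a, 0 ≤ f' t) :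
    MonotoneOn f (Ici a) := by
  refine monotoneOn_of_hasDerivWithinAt_nonneg (convex_Ici a)
    (fun t ht => (hf t ht).continuousWithinAt) (fun t ht => ?_) (by simpa using hf')
  rw [interior_Ici] at ht ⊢
  exact (hf t (mem_Ici_of_Ioi ht)).mono Ioi_subset_Ici_self

theorem exists_tendsto_of_monotoneOn_Ici {f : ℝ → ℝ} {a C : ℝ} (hf : MonotoneOn f (Ici a))
    (hC : ∀ t ∈ Ici a, f t ≤ C) : ∃ L, Tendsto f atTop (𝓝 L) := by
  have hmono : Monotone fun t => f (max a t) := fun s t hst =>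
    hf (le_max_left a s) (le_max_left a t) (max_le_max le_rfl hst)
  refine ⟨_, (tendsto_atTop_ciSup hmono ⟨C, ?_⟩).congr' ?_⟩
  · rintro _ ⟨t, rfl⟩
    exact hC _ (le_max_left a t)
  · filter_upwards [eventually_ge_atTop a] with t ht
    rw [max_eq_right ht]

theorem exists_tendsto_of_antitoneOn_Ici {f : ℝ → ℝ} {a C : ℝ} (hf : AntitoneOn f (Ici a))
    (hC : ∀ t ∈ Ici a, C ≤ f t) : ∃ L, Tendsto f atTop (𝓝 L) := by
  obtain ⟨L, hL⟩ := exists_tendsto_of_monotoneOn_Ici (f := fun t => -f t) (C := -C)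
    (fun s hs t ht hst => neg_le_neg (hf hs ht hst)) (fun t ht => neg_le_neg (hC t ht))
  exact ⟨-L, by simpa using hL.neg⟩

theorem eq_zero_of_tendsto_of_hasDerivAt {f f' : ℝ → ℝ} {L M : ℝ}
    (hf' : ∀ᶠ t in atTop, HasDerivAt f (f' t) t)
    (hf : Tendsto f atTop (𝓝 L)) (hM : Tendsto f' atTop (𝓝 M)) : M = 0 := by
  obtain ⟨T, hT⟩ := eventually_atTop.1 hf'
  have hmvt : ∀ t, ∃ ξ, t ≤ ξ ∧ (T ≤ t → f' ξ = f (t + 1) - f t) := by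
    intro t
    by_cases ht : T ≤ t
    · obtain ⟨ξ, hξ, heq⟩ := exists_hasDerivAt_eq_slope f f' (lt_add_one t)
        (fun s hs => (hT s (ht.trans hs.1)).continuousAt.continuousWithinAt)
        (fun s hs => hT s (ht.trans hs.1.le))
      exact ⟨ξ, hξ.1.le, fun _ => by simpa using heq⟩
    · exact ⟨t, le_rfl, fun h => absurd h ht⟩
  choose ξ hξt hξ using hmvt
  have hdiff : Tendsto (fun t => f (t + 1) - f t) atTop (𝓝 0) := by
    simpa using (hf.comp (tendsto_atTop_add_const_right _ 1 tendsto_id)).sub hf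
  refine tendsto_nhds_unique ((hM.comp (tendsto_atTop_mono hξt tendsto_id)).congr' ?_) hdiff
  filter_upwards [eventually_ge_atTop T] with t ht
  exact hξ t ht

theorem hasDerivAt_min_zero_sq (z : ℝ) :
    HasDerivAt (fun w : ℝ => min w 0 ^ 2) (2 * min z 0) z := by
  rcases lt_trichotomy z 0 with hz | rfl | hz
  · rw [min_eq_left hz.le]
    refine (hasDerivAt_pow 2 z).congr_of_eventuallyEq ?_ |>.congr_deriv (by ring)
    filter_upwards [Iio_mem_nhds hz] with w hw
    rw [min_eq_left hw.le]
  · rw [hasDerivAt_iff_isLittleO, min_self, mul_zero]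
    refine Asymptotics.IsBigO.trans_isLittleO (g := fun w : ℝ => w ^ 2) ?_
      ((Asymptotics.isLittleO_pow_id one_lt_two).congr_right (by simp))
    refine Asymptotics.IsBigO.of_bound 1 (Eventually.of_forall fun w => ?_)
    rcases le_total w 0 with h | h <;> simp [h]
  · rw [min_eq_right hz.le, mul_zero]
    refine (hasDerivAt_const z 0).congr_of_eventuallyEq ?_
    filter_upwards [Ioi_mem_nhds hz] with w hw
    simp [min_eq_right (le_of_lt (mem_Ioi.1 hw))]

theorem cooperative_negPart_deriv_le {a b c d u v K : ℝ} (hb : 0 ≤ b) (hc : 0 ≤ c)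
    (hK : |a| + |b| + |c| + |d| ≤ K) :
    2 * min u 0 * (a * u + b * v) + 2 * min v 0 * (c * u + d * v) ≤
      2 * K * (min u 0 ^ 2 + min v 0 ^ 2) := by
  set m := min u 0
  set n := min v 0
  have hm : m ≤ 0 := min_le_right u 0
  have hn : n ≤ 0 := min_le_right v 0
  have hmu : m * u = m ^ 2 := by
    rcases le_total u 0 with h | h <;> simp [m, h, sq]
  have hnv : n * v = n ^ 2 := by
    rcases le_total v 0 with h | h <;> simp [n, h, sq]
  have hmv : m * v ≤ m * n := mul_le_mul_of_nonpos_left (min_le_left v 0) hm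
  have hnu : n * u ≤ n * m := mul_le_mul_of_nonpos_left (min_le_left u 0) hn
  have ha : a * m ^ 2 ≤ |a| * m ^ 2 := mul_le_mul_of_nonneg_right (le_abs_self a) (sq_nonneg m)
  have hd : d * n ^ 2 ≤ |d| * n ^ 2 := mul_le_mul_of_nonneg_right (le_abs_self d) (sq_nonneg n)
  have hmn : 2 * (m * n) ≤ m ^ 2 + n ^ 2 := by nlinarith [sq_nonneg (m - n)]
  rw [abs_of_nonneg hb, abs_of_nonneg hc] at hK
  have expand : 2 * m * (a * u + b * v) + 2 * n * (c * u + d * v) =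
      2 * a * (m * u) + 2 * b * (m * v) + 2 * c * (n * u) + 2 * d * (n * v) := by ring
  rw [expand, hmu, hnv]
  nlinarith [mul_le_mul_of_nonneg_left hmv hb, mul_le_mul_of_nonneg_left hnu hc,
    mul_le_mul_of_nonneg_left hmn (add_nonneg hb hc), mul_nonneg (abs_nonneg a) (sq_nonneg n),
    mul_nonneg (abs_nonneg d) (sq_nonneg m), mul_nonneg (sub_nonneg.2 hK) (sq_nonneg m),
    mul_nonneg (sub_nonneg.2 hK) (sq_nonneg n)]

theorem nonneg_of_cooperative {u v a b c d : ℝ → ℝ} {t₀ : ℝ}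
    (ha : ContinuousOn a (Ici t₀)) (hb : ContinuousOn b (Ici t₀))
    (hc : ContinuousOn c (Ici t₀)) (hd : ContinuousOn d (Ici t₀))
    (hb₀ : ∀ t ∈ Ici t₀, 0 ≤ b t) (hc₀ : ∀ t ∈ Ici t₀, 0 ≤ c t)
    (hu : ∀ t ∈ Ici t₀, HasDerivWithinAt u (a t * u t + b t * v t) (Ici t₀) t)
    (hv : ∀ t ∈ Ici t₀, HasDerivWithinAt v (c t * u t + d t * v t) (Ici t₀) t)
    (hu₀ : 0 ≤ u t₀) (hv₀ : 0 ≤ v t₀) :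
    ∀ t ∈ Ici t₀, 0 ≤ u t ∧ 0 ≤ v t := by
  intro T hT
  obtain ⟨K, hK⟩ := (isCompact_Icc (a := t₀) (b := T)).exists_bound_of_continuousOn
    ((((ha.abs.add hb.abs).add hc.abs).add hd.abs).mono Icc_subset_Ici_self)
  have hderiv : ∀ t ∈ Ico t₀ T, HasDerivWithinAt (fun s => min (u s) 0 ^ 2 + min (v s) 0 ^ 2)
      (2 * min (u t) 0 * (a t * u t + b t * v t) + 2 * min (v t) 0 * (c t * u t + d t * v t))
      (Ici t) t := fun t ht =>
    ((hasDerivAt_min_zero_sq _).comp_hasDerivWithinAt t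
        ((hu t ht.1).mono (Ici_subset_Ici.2 ht.1))).add
      ((hasDerivAt_min_zero_sq _).comp_hasDerivWithinAt t
        ((hv t ht.1).mono (Ici_subset_Ici.2 ht.1)))
  have hcont : ContinuousOn (fun s => min (u s) 0 ^ 2 + min (v s) 0 ^ 2) (Icc t₀ T) := by
    have hu' : ContinuousOn u (Icc t₀ T) := fun t ht =>
      (hu t ht.1).continuousWithinAt.mono Icc_subset_Ici_self
    have hv' : ContinuousOn v (Icc t₀ T) := fun t ht =>
      (hv t ht.1).continuousWithinAt.mono Icc_subset_Ici_self
    fun_prop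
  have hgT := le_mul_exp_of_hasDerivWithinAt_le hcont hderiv
    (fun t ht => cooperative_negPart_deriv_le (hb₀ t ht.1) (hc₀ t ht.1)
      ((le_abs_self _).trans (hK t (Ico_subset_Icc_self ht)))) T ⟨hT, le_rfl⟩
  simp only [min_eq_right hu₀, min_eq_right hv₀, ne_eq, OfNat.ofNat_ne_zero, not_false_eq_true,
    zero_pow, add_zero, zero_mul] at hgT
  constructor <;> by_contra! h
  · nlinarith [min_eq_left h.le, sq_nonneg (min (v T) 0)]
  · nlinarith [min_eq_left h.le, sq_nonneg (min (u T) 0)]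

theorem coexistence_pos {α β A B : ℝ} (hα : 1 < α) (hβ : 1 < β) (hAB : A + α * B = 1)
    (hBA : β * A + B = 1) : 0 < A := by
  have h : (α * β - 1) * A = α - 1 := by linear_combination α * hBA - hAB
  exact pos_of_mul_pos_right (h ▸ sub_pos.2 hα) (by nlinarith)

structure IsLVSolution (r s α β : ℝ) (x y : ℝ → ℝ) : Prop where
  hasDerivWithinAt_fst :
    ∀ t ∈ Ici (0 : ℝ), HasDerivWithinAt x (r * x t * (1 - x t - α * y t)) (Ici 0) t
  hasDerivWithinAt_snd :
    ∀ t ∈ Ici (0 : ℝ), HasDerivWithinAt y (s * y t * (1 - y t - β * x t)) (Ici 0) t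

namespace IsLVSolution

variable {r s α β : ℝ} {x y x₁ y₁ x₂ y₂ : ℝ → ℝ}

theorem swap (h : IsLVSolution r s α β x y) : IsLVSolution s r β α y x :=
  ⟨h.hasDerivWithinAt_snd, h.hasDerivWithinAt_fst⟩

theorem continuousOn_fst (h : IsLVSolution r s α β x y) : ContinuousOn x (Ici 0) :=
  fun t ht => (h.hasDerivWithinAt_fst t ht).continuousWithinAt

theorem continuousOn_snd (h : IsLVSolution r s α β x y) : ContinuousOn y (Ici 0) :=
  h.swap.continuousOn_fst

theorem nonneg (h : IsLVSolution r s α β x y) (hx₀ : 0 ≤ x 0) (hy₀ : 0 ≤ y 0) :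
    ∀ t ∈ Ici 0, 0 ≤ x t ∧ 0 ≤ y t := by
  have hx := h.continuousOn_fst
  have hy := h.continuousOn_snd
  refine nonneg_of_cooperative (a := fun t => r * (1 - x t - α * y t)) (b := 0) (c := 0)
    (d := fun t => s * (1 - y t - β * x t)) (by fun_prop) continuousOn_const continuousOn_const
    (by fun_prop) (fun _ _ => le_rfl) (fun _ _ => le_rfl) (fun t ht => ?_) (fun t ht => ?_) hx₀ hy₀
  · exact (h.hasDerivWithinAt_fst t ht).congr_deriv (by simp only [Pi.zero_apply]; ring)
  · exact (h.hasDerivWithinAt_snd t ht).congr_deriv (by simp only [Pi.zero_apply]; ring)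

theorem hasDerivWithinAt_sub_fst (h₁ : IsLVSolution r s α β x₁ y₁)
    (h₂ : IsLVSolution r s α β x₂ y₂) {t : ℝ} (ht : t ∈ Ici 0) :
    HasDerivWithinAt (fun t => x₁ t - x₂ t)
      (r * (1 - x₁ t - x₂ t - α * y₁ t) * (x₁ t - x₂ t) + r * α * x₂ t * (y₂ t - y₁ t))
      (Ici 0) t :=
  ((h₁.hasDerivWithinAt_fst t ht).sub (h₂.hasDerivWithinAt_fst t ht)).congr_deriv (by ring)

theorem comparison (h₁ : IsLVSolution r s α β x₁ y₁) (h₂ : IsLVSolution r s α β x₂ y₂)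
    (hr : 0 ≤ r) (hs : 0 ≤ s) (hα : 0 ≤ α) (hβ : 0 ≤ β)
    (hx₂ : ∀ t ∈ Ici 0, 0 ≤ x₂ t) (hy₁ : ∀ t ∈ Ici 0, 0 ≤ y₁ t)
    (hx₀ : x₂ 0 ≤ x₁ 0) (hy₀ : y₁ 0 ≤ y₂ 0) :
    ∀ t ∈ Ici 0, x₂ t ≤ x₁ t ∧ y₁ t ≤ y₂ t := by
  have hx₁ := h₁.continuousOn_fst
  have hy₁' := h₁.continuousOn_snd
  have hx₂' := h₂.continuousOn_fst
  have hy₂ := h₂.continuousOn_snd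
  have key := nonneg_of_cooperative (u := fun t => x₁ t - x₂ t) (v := fun t => y₂ t - y₁ t)
    (a := fun t => r * (1 - x₁ t - x₂ t - α * y₁ t)) (b := fun t => r * α * x₂ t)
    (c := fun t => s * β * y₁ t) (d := fun t => s * (1 - y₂ t - y₁ t - β * x₂ t))
    (by fun_prop) (by fun_prop) (by fun_prop) (by fun_prop)
    (fun t ht => by have := hx₂ t ht; positivity) (fun t ht => by have := hy₁ t ht; positivity)
    (fun t ht => hasDerivWithinAt_sub_fst h₁ h₂ ht)
    (fun t ht => (hasDerivWithinAt_sub_fst h₂.swap h₁.swap ht).congr_deriv (by ring))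
    (sub_nonneg.2 hx₀) (sub_nonneg.2 hy₀)
  exact fun t ht => ⟨sub_nonneg.1 (key t ht).1, sub_nonneg.1 (key t ht).2⟩

theorem strict_comparison_fst (h₁ : IsLVSolution r s α β x₁ y₁) (h₂ : IsLVSolution r s α β x₂ y₂)
    (hr : 0 ≤ r) (hα : 0 ≤ α) (hx₂ : ∀ t ∈ Ici 0, 0 ≤ x₂ t)
    (hord : ∀ t ∈ Ici 0, x₂ t ≤ x₁ t ∧ y₁ t ≤ y₂ t) (hx₀ : x₂ 0 < x₁ 0) :
    ∀ t ∈ Ici 0, x₂ t < x₁ t := by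
  intro T hT
  have hsub : Icc 0 T ⊆ Ici 0 := Icc_subset_Ici_self
  have hx₁ := h₁.continuousOn_fst.mono hsub
  have hy₁ := h₁.continuousOn_snd.mono hsub
  have hx₂' := h₂.continuousOn_fst.mono hsub
  refine sub_pos.1 (pos_of_mul_le_hasDerivWithinAt (f := fun t => x₁ t - x₂ t)
    (a := fun t => r * (1 - x₁ t - x₂ t - α * y₁ t)) hT (by fun_prop) (by fun_prop)
    (fun t ht => (hasDerivWithinAt_sub_fst h₁ h₂ ht.1).mono (Ici_subset_Ici.2 ht.1))
    (fun t ht => sub_nonneg.2 (hord t ht.1).1) (fun t ht => ?_) (sub_pos.2 hx₀))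
  have := mul_nonneg (mul_nonneg (mul_nonneg hr hα) (hx₂ t ht.1)) (sub_nonneg.2 (hord t ht.1).2)
  linarith

theorem nullcline_invariant (h : IsLVSolution r s α β x y) (hr : 0 ≤ r) (hs : 0 ≤ s)
    (hα : 0 ≤ α) (hβ : 0 ≤ β) (hnn : ∀ t ∈ Ici 0, 0 ≤ x t ∧ 0 ≤ y t) {t₁ : ℝ} (ht₁ : 0 ≤ t₁)
    (hP : 0 ≤ 1 - x t₁ - α * y t₁) (hQ : 1 - y t₁ - β * x t₁ ≤ 0) :
    ∀ t ∈ Ici t₁, 0 ≤ 1 - x t - α * y t ∧ 1 - y t - β * x t ≤ 0 := by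
  have hsub : Ici t₁ ⊆ Ici 0 := Ici_subset_Ici.2 ht₁
  have hx := h.continuousOn_fst.mono hsub
  have hy := h.continuousOn_snd.mono hsub
  have hderiv {f : ℝ → ℝ} {f' : ℝ → ℝ}
      (hf : ∀ t ∈ Ici (0 : ℝ), HasDerivWithinAt f (f' t) (Ici 0) t) :
      ∀ t ∈ Ici t₁, HasDerivWithinAt f (f' t) (Ici t₁) t :=
    fun t ht => (hf t (hsub ht)).mono hsub
  have hx' := hderiv h.hasDerivWithinAt_fst
  have hy' := hderiv h.hasDerivWithinAt_snd
  have key := nonneg_of_cooperative (u := fun t => 1 - x t - α * y t)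
    (v := fun t => y t + β * x t - 1) (a := fun t => -(r * x t)) (b := fun t => α * s * y t)
    (c := fun t => β * r * x t) (d := fun t => -(s * y t))
    (by fun_prop) (by fun_prop) (by fun_prop) (by fun_prop)
    (fun t ht => by have := (hnn t (hsub ht)).2; positivity)
    (fun t ht => by have := (hnn t (hsub ht)).1; positivity)
    (fun t ht => (((hasDerivWithinAt_const t _ 1).sub (hx' t ht)).sub
      ((hy' t ht).const_mul α)).congr_deriv (by ring))
    (fun t ht => (((hy' t ht).add ((hx' t ht).const_mul β)).sub_const 1).congr_deriv (by ring))
    hP (by linarith)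
  exact fun t ht => ⟨(key t ht).1, by linarith [(key t ht).2]⟩

theorem exists_eventually_sign (h : IsLVSolution r s α β x y) (hr : 0 ≤ r) (hs : 0 ≤ s)
    (hα : 0 ≤ α) (hβ : 0 ≤ β) (hnn : ∀ t ∈ Ici 0, 0 ≤ x t ∧ 0 ≤ y t) :
    ∃ t₁, 0 ≤ t₁ ∧
      ((∀ t ∈ Ici t₁, 0 ≤ 1 - x t - α * y t) ∨ (∀ t ∈ Ici t₁, 1 - x t - α * y t ≤ 0)) ∧
      ((∀ t ∈ Ici t₁, 0 ≤ 1 - y t - β * x t) ∨ (∀ t ∈ Ici t₁, 1 - y t - β * x t ≤ 0)) := by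
  by_cases hPQ : ∃ t₁, 0 ≤ t₁ ∧ 0 ≤ 1 - x t₁ - α * y t₁ ∧ 1 - y t₁ - β * x t₁ ≤ 0
  · obtain ⟨t₁, ht₁, hP, hQ⟩ := hPQ
    have := h.nullcline_invariant hr hs hα hβ hnn ht₁ hP hQ
    exact ⟨t₁, ht₁, .inl fun t ht => (this t ht).1, .inr fun t ht => (this t ht).2⟩
  by_cases hQP : ∃ t₁, 0 ≤ t₁ ∧ 0 ≤ 1 - y t₁ - β * x t₁ ∧ 1 - x t₁ - α * y t₁ ≤ 0
  · obtain ⟨t₁, ht₁, hQ, hP⟩ := hQP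
    have := h.swap.nullcline_invariant hs hr hβ hα (fun t ht => (hnn t ht).symm) ht₁ hQ hP
    exact ⟨t₁, ht₁, .inr fun t ht => (this t ht).2, .inl fun t ht => (this t ht).1⟩
  push Not at hPQ hQP
  -- Outside both invariant regions the two nullcline functions have the same strict sign,
  -- so `1 - x - α y` never vanishes and keeps the sign it has at time `0`.
  have hP_ne : ∀ t ∈ Ici (0 : ℝ), 1 - x t - α * y t ≠ 0 := fun t ht hP0 =>
    (hQP t ht (hPQ t ht hP0.ge).le).ne' hP0
  have hPc : ContinuousOn (fun t => 1 - x t - α * y t) (Ici 0) := by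
    have := h.continuousOn_fst; have := h.continuousOn_snd; fun_prop
  rcases (hP_ne 0 self_mem_Ici).lt_or_gt with h₀ | h₀
  · have hneg : ∀ t ∈ Ici (0 : ℝ), 1 - x t - α * y t < 0 := fun t ht => by
      by_contra! hpos
      obtain ⟨c, hc, hc0⟩ := isPreconnected_Ici.intermediate_value self_mem_Ici ht hPc ⟨h₀.le, hpos⟩
      exact hP_ne c hc hc0
    refine ⟨0, le_rfl, .inr fun t ht => (hneg t ht).le, .inr fun t ht => ?_⟩
    by_contra! hQ
    exact (hneg t ht).not_gt (hQP t ht hQ.le)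
  · have hpos : ∀ t ∈ Ici (0 : ℝ), 0 < 1 - x t - α * y t := fun t ht => by
      by_contra! hneg
      obtain ⟨c, hc, hc0⟩ := isPreconnected_Ici.intermediate_value ht self_mem_Ici hPc ⟨hneg, h₀.le⟩
      exact hP_ne c hc hc0
    exact ⟨0, le_rfl, .inl fun t ht => (hpos t ht).le,
      .inl fun t ht => (hPQ t ht (hpos t ht).le).le⟩

theorem exists_tendsto_fst (h : IsLVSolution r s α β x y) (hr : 0 ≤ r) (hα : 0 ≤ α)
    (hnn : ∀ t ∈ Ici 0, 0 ≤ x t ∧ 0 ≤ y t) {t₁ : ℝ} (ht₁ : 0 ≤ t₁)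
    (hsign : (∀ t ∈ Ici t₁, 0 ≤ 1 - x t - α * y t) ∨ (∀ t ∈ Ici t₁, 1 - x t - α * y t ≤ 0)) :
    ∃ L, Tendsto x atTop (𝓝 L) := by
  have hsub : Ici t₁ ⊆ Ici 0 := Ici_subset_Ici.2 ht₁
  have hx : ∀ t ∈ Ici t₁, HasDerivWithinAt x (r * x t * (1 - x t - α * y t)) (Ici t₁) t :=
    fun t ht => (h.hasDerivWithinAt_fst t (hsub ht)).mono hsub
  rcases hsign with hP | hP
  · refine exists_tendsto_of_monotoneOn_Ici (C := 1)
      (monotoneOn_Ici_of_hasDerivWithinAt hx fun t ht => ?_) fun t ht => ?_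
    · have := hP t (mem_Ici_of_Ioi ht); have := (hnn t (hsub (mem_Ici_of_Ioi ht))).1
      positivity
    · nlinarith [hP t ht, (hnn t (hsub ht)).2]
  · refine exists_tendsto_of_antitoneOn_Ici (C := 0) ?_ fun t ht => (hnn t (hsub ht)).1
    have := monotoneOn_Ici_of_hasDerivWithinAt (fun t ht => (hx t ht).neg) fun t ht =>
      neg_nonneg.2 (mul_nonpos_of_nonneg_of_nonpos
        (mul_nonneg hr (hnn t (hsub (mem_Ici_of_Ioi ht))).1) (hP t (mem_Ici_of_Ioi ht)))
    exact fun a ha b hb hab => neg_le_neg_iff.1 (this ha hb hab)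

theorem limit_stationary_fst (h : IsLVSolution r s α β x y) (hr : r ≠ 0) {L₁ L₂ : ℝ}
    (hx : Tendsto x atTop (𝓝 L₁)) (hy : Tendsto y atTop (𝓝 L₂)) :
    L₁ * (1 - L₁ - α * L₂) = 0 := by
  have hderiv : ∀ᶠ t in atTop, HasDerivAt x (r * x t * (1 - x t - α * y t)) t := by
    filter_upwards [eventually_gt_atTop 0] with t ht
    exact (h.hasDerivWithinAt_fst t ht.le).hasDerivAt (Ici_mem_nhds ht)
  have := eq_zero_of_tendsto_of_hasDerivAt hderiv hx
    ((tendsto_const_nhds.mul hx).mul ((tendsto_const_nhds.sub hx).sub (tendsto_const_nhds.mul hy)))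
  simpa [hr, mul_assoc] using this

theorem exists_tendsto_equilibrium (h : IsLVSolution r s α β x y) (hr : 0 < r) (hs : 0 < s)
    (hα : 0 ≤ α) (hβ : 0 ≤ β) (hx₀ : 0 ≤ x 0) (hy₀ : 0 ≤ y 0) :
    ∃ L₁ L₂, Tendsto x atTop (𝓝 L₁) ∧ Tendsto y atTop (𝓝 L₂) ∧ 0 ≤ L₁ ∧ 0 ≤ L₂ ∧
      L₁ * (1 - L₁ - α * L₂) = 0 ∧ L₂ * (1 - L₂ - β * L₁) = 0 := by
  have hnn := h.nonneg hx₀ hy₀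
  obtain ⟨t₁, ht₁, hP, hQ⟩ := h.exists_eventually_sign hr.le hs.le hα hβ hnn
  obtain ⟨L₁, hL₁⟩ := h.exists_tendsto_fst hr.le hα hnn ht₁ hP
  obtain ⟨L₂, hL₂⟩ := h.swap.exists_tendsto_fst hs.le hβ (fun t ht => (hnn t ht).symm) ht₁ hQ
  refine ⟨L₁, L₂, hL₁, hL₂, ge_of_tendsto hL₁ ?_, ge_of_tendsto hL₂ ?_,
    h.limit_stationary_fst hr.ne' hL₁ hL₂, h.swap.limit_stationary_fst hs.ne' hL₂ hL₁⟩ <;>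
  filter_upwards [eventually_ge_atTop 0] with t ht
  exacts [(hnn t ht).1, (hnn t ht).2]

theorem weighted_gap_pos (h₁ : IsLVSolution r s α β x₁ y₁) (h₂ : IsLVSolution r s α β x₂ y₂)
    (hr : 0 ≤ r) (hs : 0 ≤ s) (hα : 0 ≤ α) (hβ : 0 ≤ β)
    (hx₂ : ∀ t ∈ Ici 0, 0 ≤ x₂ t) (hy₁ : ∀ t ∈ Ici 0, 0 ≤ y₁ t)
    (hord : ∀ t ∈ Ici 0, x₂ t ≤ x₁ t ∧ y₁ t ≤ y₂ t) (hlt : x₂ 0 < x₁ 0 ∨ y₁ 0 < y₂ 0)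
    {p q : ℝ} (hp : 0 < p) (hq : 0 < q) :
    ∀ t ∈ Ici 0, 0 < p * (x₁ t - x₂ t) + q * (y₂ t - y₁ t) := by
  intro t ht
  have hu := sub_nonneg.2 (hord t ht).1
  have hv := sub_nonneg.2 (hord t ht).2
  rcases hlt with hlt | hlt
  · have := sub_pos.2 (h₁.strict_comparison_fst h₂ hr hα hx₂ hord hlt t ht)
    positivity
  · have := sub_pos.2 (h₂.swap.strict_comparison_fst h₁.swap hs hβ hy₁
      (fun t ht => (hord t ht).symm) hlt t ht)
    positivity

/-- The weighted gap `w = s B (x₁ - x₂) + r A (y₂ - y₁)` stays positive, and near `(A, B)` the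
coefficients of `w'` in terms of the two gaps tend to `r s A B (β - 1)` and `r s A B (α - 1)`,
so `w` is eventually nondecreasing and cannot tend to `0`. -/
theorem false_of_tendsto_coexistence (h₁ : IsLVSolution r s α β x₁ y₁)
    (h₂ : IsLVSolution r s α β x₂ y₂) (hr : 0 < r) (hs : 0 < s) (hα : 1 < α) (hβ : 1 < β)
    {A B : ℝ} (hAB : A + α * B = 1) (hBA : β * A + B = 1)
    (hx₂ : ∀ t ∈ Ici 0, 0 ≤ x₂ t) (hy₁ : ∀ t ∈ Ici 0, 0 ≤ y₁ t)
    (hord : ∀ t ∈ Ici 0, x₂ t ≤ x₁ t ∧ y₁ t ≤ y₂ t) (hlt : x₂ 0 < x₁ 0 ∨ y₁ 0 < y₂ 0)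
    (hx₁A : Tendsto x₁ atTop (𝓝 A)) (hy₁B : Tendsto y₁ atTop (𝓝 B))
    (hx₂A : Tendsto x₂ atTop (𝓝 A)) (hy₂B : Tendsto y₂ atTop (𝓝 B)) : False := by
  have hA := coexistence_pos hα hβ hAB hBA
  have hB := coexistence_pos (A := B) (B := A) hβ hα (by linarith) (by linarith)
  set w : ℝ → ℝ := fun t => s * B * (x₁ t - x₂ t) + r * A * (y₂ t - y₁ t)
  have hw_pos := h₁.weighted_gap_pos h₂ hr.le hs.le (by linarith) (by linarith) hx₂ hy₁ hord hlt
    (by positivity : 0 < s * B) (by positivity : 0 < r * A)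
  set cu : ℝ → ℝ := fun t => s * B * (r * (1 - x₁ t - x₂ t - α * y₁ t)) + r * A * (s * β * y₁ t)
  set cv : ℝ → ℝ := fun t => s * B * (r * α * x₂ t) + r * A * (s * (1 - y₂ t - y₁ t - β * x₂ t))
  have hcu : Tendsto cu atTop (𝓝 (r * s * A * B * (β - 1))) := by
    convert (tendsto_const_nhds.mul (tendsto_const_nhds.mul
      (((tendsto_const_nhds.sub hx₁A).sub hx₂A).sub (tendsto_const_nhds.mul hy₁B)))).add
      (tendsto_const_nhds.mul (tendsto_const_nhds.mul hy₁B)) using 2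
    linear_combination r * s * B * hAB
  have hcv : Tendsto cv atTop (𝓝 (r * s * A * B * (α - 1))) := by
    convert (tendsto_const_nhds.mul (tendsto_const_nhds.mul hx₂A)).add
      (tendsto_const_nhds.mul (tendsto_const_nhds.mul
        (((tendsto_const_nhds.sub hy₂B).sub hy₁B).sub (tendsto_const_nhds.mul hx₂A)))) using 2
    linear_combination r * s * A * hBA
  obtain ⟨T, hT⟩ := eventually_atTop.1 ((hcu.eventually (lt_mem_nhds (by
    have := sub_pos.2 hβ; positivity))).and (hcv.eventually (lt_mem_nhds (by
    have := sub_pos.2 hα; positivity))))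
  set T₀ := max T 0
  have hmono : MonotoneOn w (Ici T₀) := by
    refine monotoneOn_Ici_of_hasDerivWithinAt (f' := fun t => cu t * (x₁ t - x₂ t) +
      cv t * (y₂ t - y₁ t)) (fun t ht => ?_) fun t ht => ?_
    · have ht₀ : t ∈ Ici (0 : ℝ) := mem_Ici.2 (le_trans (le_max_right _ _) ht)
      exact ((((hasDerivWithinAt_sub_fst h₁ h₂ ht₀).const_mul (s * B)).add
        ((hasDerivWithinAt_sub_fst h₂.swap h₁.swap ht₀).const_mul (r * A))).congr_deriv
          (by simp only [cu, cv]; ring)).mono (Ici_subset_Ici.2 (le_max_right _ _))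
    · have ht₀ : t ∈ Ici (0 : ℝ) := mem_Ici.2 (le_trans (le_max_right _ _) (le_of_lt ht))
      have := hT t (le_trans (le_max_left _ _) (le_of_lt ht))
      have := sub_nonneg.2 (hord t ht₀).1
      have := sub_nonneg.2 (hord t ht₀).2
      nlinarith
  have hw_lim : Tendsto w atTop (𝓝 0) := by
    simpa using (tendsto_const_nhds.mul (hx₁A.sub hx₂A)).add (tendsto_const_nhds.mul (hy₂B.sub hy₁B))
  have hw_le : w T₀ ≤ 0 := ge_of_tendsto hw_lim (by
    filter_upwards [eventually_ge_atTop T₀] with t ht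
    exact hmono self_mem_Ici ht ht)
  exact hw_le.not_gt (hw_pos T₀ (mem_Ici.2 (le_max_right _ _)))

theorem tendsto_one_zero_of_below (h₁ : IsLVSolution r s α β x₁ y₁)
    (h₂ : IsLVSolution r s α β x₂ y₂) (hr : 0 < r) (hs : 0 < s) (hα : 1 < α) (hβ : 1 < β)
    {A B : ℝ} (hAB : A + α * B = 1) (hBA : β * A + B = 1)
    (hx₂₀ : 0 ≤ x₂ 0) (hy₁₀ : 0 ≤ y₁ 0) (hx₀ : x₂ 0 ≤ x₁ 0) (hy₀ : y₁ 0 ≤ y₂ 0)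
    (hlt : x₂ 0 < x₁ 0 ∨ y₁ 0 < y₂ 0)
    (hx₂ : Tendsto x₂ atTop (𝓝 A)) (hy₂ : Tendsto y₂ atTop (𝓝 B)) :
    Tendsto x₁ atTop (𝓝 1) ∧ Tendsto y₁ atTop (𝓝 0) := by
  have hnn₁ := h₁.nonneg (hx₂₀.trans hx₀) hy₁₀
  have hnn₂ := h₂.nonneg hx₂₀ (hy₁₀.trans hy₀)
  have hord := h₁.comparison h₂ hr.le hs.le (by linarith) (by linarith)
    (fun t ht => (hnn₂ t ht).1) (fun t ht => (hnn₁ t ht).2) hx₀ hy₀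
  obtain ⟨L₁, L₂, hL₁, hL₂, -, hL₂₀, hE₁, hE₂⟩ :=
    h₁.exists_tendsto_equilibrium hr hs (by linarith) (by linarith) (hx₂₀.trans hx₀) hy₁₀
  have hAL₁ : A ≤ L₁ := le_of_tendsto_of_tendsto hx₂ hL₁ (by
    filter_upwards [eventually_ge_atTop 0] with t ht
    exact (hord t ht).1)
  have hP : 1 - L₁ - α * L₂ = 0 :=
    (mul_eq_zero.1 hE₁).resolve_left (coexistence_pos hα hβ hAB hBA |>.trans_le hAL₁).ne'
  rcases hL₂₀.eq_or_lt with rfl | hL₂₀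
  · exact ⟨by rwa [show L₁ = 1 by linarith] at hL₁, hL₂⟩
  have hQ : 1 - L₂ - β * L₁ = 0 := (mul_eq_zero.1 hE₂).resolve_left hL₂₀.ne'
  have hdet : α * β - 1 ≠ 0 := by nlinarith
  have hL₁A : L₁ = A := mul_left_cancel₀ hdet (by linear_combination hP - α * hQ - α * hBA + hAB)
  have hL₂B : L₂ = B := mul_left_cancel₀ hdet (by linear_combination hQ - β * hP - β * hAB + hBA)
  exact (h₁.false_of_tendsto_coexistence h₂ hr hs hα hβ hAB hBA (fun t ht => (hnn₂ t ht).1)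
    (fun t ht => (hnn₁ t ht).2) hord hlt (hL₁A ▸ hL₁) (hL₂B ▸ hL₂) hx₂ hy₂).elim

end IsLVSolution

/-- The stable manifold of the saddle `(A,B)` separates the basins of
attraction: if the forward solution from `(x₀, y⋆)` converges to `(A,B)`,
then solutions starting at `(x₀,y₀)` with `0 < y₀ < y⋆` converge to `(1,0)`,
and solutions starting at `(x₀,y₀)` with `y₀ > y⋆` converge to `(0,1)`. -/
theorem stmt_9 (α β δ : ℝ) (hα : 1 < α) (hβ : 1 < β) (hδ : 0 < δ)
    (A B : ℝ) (hA : A = (α - 1) / (α * β - 1)) (hB : B = (β - 1) / (α * β - 1))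
    (x₀ ystar : ℝ) (hx₀ : 0 < x₀) (hystar : 0 < ystar)
    (xs ys : ℝ → ℝ)
    (hxs : ∀ t ∈ Set.Ici (0 : ℝ),
      HasDerivWithinAt xs (xs t * (1 - xs t - α * ys t)) (Set.Ici 0) t)
    (hys : ∀ t ∈ Set.Ici (0 : ℝ),
      HasDerivWithinAt ys (δ * ys t * (1 - ys t - β * xs t)) (Set.Ici 0) t)
    (hxs0 : xs 0 = x₀) (hys0 : ys 0 = ystar)
    (hconv : Tendsto (fun t => (xs t, ys t)) atTop (nhds (A, B))) :
    (∀ y₀ : ℝ, 0 < y₀ → y₀ < ystar →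
      ∀ x y : ℝ → ℝ,
        (∀ t ∈ Set.Ici (0 : ℝ),
          HasDerivWithinAt x (x t * (1 - x t - α * y t)) (Set.Ici 0) t) →
        (∀ t ∈ Set.Ici (0 : ℝ),
          HasDerivWithinAt y (δ * y t * (1 - y t - β * x t)) (Set.Ici 0) t) →
        x 0 = x₀ → y 0 = y₀ →
        Tendsto (fun t => (x t, y t)) atTop (nhds ((1 : ℝ), (0 : ℝ)))) ∧
    (∀ y₀ : ℝ, ystar < y₀ →
      ∀ x y : ℝ → ℝ,
        (∀ t ∈ Set.Ici (0 : ℝ),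
          HasDerivWithinAt x (x t * (1 - x t - α * y t)) (Set.Ici 0) t) →
        (∀ t ∈ Set.Ici (0 : ℝ),
          HasDerivWithinAt y (δ * y t * (1 - y t - β * x t)) (Set.Ici 0) t) →
        x 0 = x₀ → y 0 = y₀ →
        Tendsto (fun t => (x t, y t)) atTop (nhds ((0 : ℝ), (1 : ℝ)))) := by
  have hdet : α * β - 1 ≠ 0 := by nlinarith
  have hAB : A + α * B = 1 := by rw [hA, hB]; field_simp; ring
  have hBA : β * A + B = 1 := by
    rw [hA, hB, mul_div_assoc', ← add_div, div_eq_one_iff_eq hdet]; ring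
  have lv {x y : ℝ → ℝ}
      (hx : ∀ t ∈ Ici (0 : ℝ), HasDerivWithinAt x (x t * (1 - x t - α * y t)) (Ici 0) t)
      (hy : ∀ t ∈ Ici (0 : ℝ), HasDerivWithinAt y (δ * y t * (1 - y t - β * x t)) (Ici 0) t) :
      IsLVSolution 1 δ α β x y :=
    ⟨fun t ht => by simpa only [one_mul] using hx t ht, hy⟩
  have hs := lv hxs hys
  refine ⟨fun y₀ hy₀ hlt x y hx hy hx0 hy0 => ?_, fun y₀ hlt x y hx hy hx0 hy0 => ?_⟩
  · obtain ⟨h₁, h₂⟩ := (lv hx hy).tendsto_one_zero_of_below hs one_pos hδ hα hβ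
      hAB hBA (by linarith) (by linarith) (by rw [hx0, hxs0]) (by linarith) (.inr (by linarith))
      hconv.fst_nhds hconv.snd_nhds
    exact h₁.prodMk_nhds h₂
  · obtain ⟨h₁, h₂⟩ := (lv hx hy).swap.tendsto_one_zero_of_below hs.swap hδ one_pos hβ
      hα (by linarith) (by linarith) (by linarith) (by linarith) (by linarith)
      (by rw [hx0, hxs0]) (.inl (by linarith)) hconv.snd_nhds hconv.fst_nhds
    exact h₂.prodMk_nhds h₁
end

section
/- Let α>1, β>1, δ>0, A=(α-1)/(αβ-1), B=(β-1)/(αβ-1). Suppose (x₁,y₁) and (x₂,y₂) are points with x₁,y₁,x₂,y₂>0 such that the solutions of the system dx/dt = x(1-x-αy), dy/dt = δy(1-y-βx) on [0,∞) with initial conditions (x₁,y₁) and (x₂,y₂) both converge to (A,B) as t→∞. If x₁<x₂ then y₁<y₂; that is, the separatrix function y=s(x) is strictly increasing in x. -/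
open Filter Set Topology

/-!
Suppose `y₂ ≤ y₁`. The competition system is competitive: the differences `(u₂ - u₁, v₁ - v₂)`
solve a cooperative linear system, so the order `u₁ < u₂`, `v₂ ≤ v₁` persists for all `t ≥ 0`.
Along such a pair, `V = δ log (u₂ / u₁) + log (v₁ / v₂)` is nondecreasing, since
`V' = δ ((β - 1) (u₂ - u₁) + (α - 1) (v₁ - v₂))`. But `V 0 > 0`, while `V → 0` because both
solutions tend to `(A, B)` with `A, B > 0`.
-/

lemma pos_of_hasDerivWithinAt_ge_neg_mul {f f' : ℝ → ℝ} {K T : ℝ} (hT : 0 ≤ T)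
    (hf : ∀ t ∈ Icc 0 T, HasDerivWithinAt f (f' t) (Icc 0 T) t)
    (hf' : ∀ t ∈ Ioo 0 T, -K * f t ≤ f' t) (h0 : 0 < f 0) : 0 < f T := by
  have hg : ∀ t ∈ Icc 0 T, HasDerivWithinAt (fun s => f s * Real.exp (K * s))
      ((f' t + K * f t) * Real.exp (K * t)) (Icc 0 T) t := by
    intro t ht
    have hexp : HasDerivAt (fun s => Real.exp (K * s)) (Real.exp (K * t) * K) t := by
      simpa using ((hasDerivAt_id t).const_mul K).exp
    exact ((hf t ht).mul hexp.hasDerivWithinAt).congr_deriv (by ring)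
  have hmono : MonotoneOn (fun s => f s * Real.exp (K * s)) (Icc 0 T) := by
    refine monotoneOn_of_hasDerivWithinAt_nonneg (convex_Icc 0 T)
      (fun t ht => (hg t ht).continuousWithinAt)
      (fun t ht => (hg t (interior_subset ht)).mono interior_subset) fun t ht => ?_
    rw [interior_Icc] at ht
    exact mul_nonneg (by linarith [hf' t ht]) (Real.exp_pos _).le
  have h := hmono (left_mem_Icc.2 hT) (right_mem_Icc.2 hT) hT
  simp only [mul_zero, Real.exp_zero, mul_one] at h
  exact pos_of_mul_pos_left (h0.trans_le h) (Real.exp_pos _).le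

lemma pos_pair_of_hasDerivWithinAt {P R P' R' : ℝ → ℝ} {K T : ℝ}
    (hP : ∀ t ∈ Icc 0 T, HasDerivWithinAt P (P' t) (Icc 0 T) t)
    (hR : ∀ t ∈ Icc 0 T, HasDerivWithinAt R (R' t) (Icc 0 T) t)
    (hb : ∀ t ∈ Icc 0 T, 0 < P t → 0 < R t → -K * P t ≤ P' t ∧ -K * R t ≤ R' t)
    (hP0 : 0 < P 0) (hR0 : 0 < R 0) :
    ∀ t ∈ Icc 0 T, 0 < P t ∧ 0 < R t := by
  by_contra! hexit
  -- `τ` is the first exit time from the open quadrant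
  set S := Icc 0 T ∩ (fun t => min (P t) (R t)) ⁻¹' Iic 0
  have hS : IsClosed S :=
    ContinuousOn.preimage_isClosed_of_isClosed
      (fun t ht => ((hP t ht).continuousWithinAt.min (hR t ht).continuousWithinAt))
      isClosed_Icc isClosed_Iic
  have hSne : S.Nonempty := by
    obtain ⟨t, ht, hPR⟩ := hexit
    exact ⟨t, ht, by by_cases h : 0 < P t <;> simp [h, hPR, le_of_not_gt]⟩
  have hSbdd : BddBelow S := ⟨0, fun s hs => hs.1.1⟩
  obtain ⟨⟨hτ0, hτT⟩, hτ⟩ := hS.csInf_mem hSne hSbdd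
  set τ := sInf S
  have hsub : Icc 0 τ ⊆ Icc 0 T := Icc_subset_Icc le_rfl hτT
  have hbefore : ∀ t ∈ Ioo 0 τ, 0 < P t ∧ 0 < R t := fun t ht => by
    have := notMem_of_lt_csInf ht.2 hSbdd
    simp_all [S, ht.1.le, (ht.2.trans_le hτT).le]
  have hPτ := pos_of_hasDerivWithinAt_ge_neg_mul hτ0 (fun t ht => (hP t (hsub ht)).mono hsub)
    (fun t ht => (hb t (hsub (Ioo_subset_Icc_self ht)) (hbefore t ht).1 (hbefore t ht).2).1) hP0
  have hRτ := pos_of_hasDerivWithinAt_ge_neg_mul hτ0 (fun t ht => (hR t (hsub ht)).mono hsub)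
    (fun t ht => (hb t (hsub (Ioo_subset_Icc_self ht)) (hbefore t ht).1 (hbefore t ht).2).2) hR0
  exact (lt_min hPτ hRτ).not_ge hτ

lemma pos_pos_of_cooperative {e₁ e₂ a b P Q : ℝ → ℝ} {T : ℝ}
    (he₁ : ContinuousOn e₁ (Icc 0 T)) (he₂ : ContinuousOn e₂ (Icc 0 T))
    (ha : ∀ t ∈ Icc 0 T, 0 ≤ a t) (hb : ∀ t ∈ Icc 0 T, 0 ≤ b t)
    (hP : ∀ t ∈ Icc 0 T, HasDerivWithinAt P (e₁ t * P t + a t * Q t) (Icc 0 T) t)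
    (hQ : ∀ t ∈ Icc 0 T, HasDerivWithinAt Q (e₂ t * Q t + b t * P t) (Icc 0 T) t)
    (hP0 : 0 < P 0) (hQ0 : 0 < Q 0) :
    ∀ t ∈ Icc 0 T, 0 < P t ∧ 0 < Q t := by
  obtain ⟨K₁, hK₁⟩ := isCompact_Icc.exists_bound_of_continuousOn he₁
  obtain ⟨K₂, hK₂⟩ := isCompact_Icc.exists_bound_of_continuousOn he₂
  refine pos_pair_of_hasDerivWithinAt (K := max K₁ K₂) hP hQ (fun t ht hPt hQt => ?_) hP0 hQ0
  have h₁ : -max K₁ K₂ ≤ e₁ t := (neg_le_neg (le_max_left _ _)).trans (neg_le_of_abs_le (hK₁ t ht))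
  have h₂ : -max K₁ K₂ ≤ e₂ t := (neg_le_neg (le_max_right _ _)).trans (neg_le_of_abs_le (hK₂ t ht))
  constructor
  · nlinarith [mul_nonneg (ha t ht) hQt.le]
  · nlinarith [mul_nonneg (hb t ht) hPt.le]

lemma eventually_forall_pos_add_mul {K : Set ℝ} (hK : IsCompact K) {b c : ℝ → ℝ}
    (hb : ContinuousOn b K) (hc : ContinuousOn c K) (hpos : ∀ t ∈ K, 0 < b t) :
    ∀ᶠ ε in 𝓝 0, ∀ t ∈ K, 0 < b t + ε * c t := by
  rcases K.eq_empty_or_nonempty with rfl | hne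
  · simp
  obtain ⟨t₀, ht₀, hmin⟩ := hK.exists_isMinOn hne hb
  obtain ⟨M, hM⟩ := hK.exists_bound_of_continuousOn hc
  have hM0 : 0 ≤ M := (norm_nonneg _).trans (hM t₀ ht₀)
  have hm : 0 < b t₀ / (M + 1) := div_pos (hpos t₀ ht₀) (by linarith)
  filter_upwards [Metric.ball_mem_nhds 0 hm] with ε hε t ht
  rw [Metric.mem_ball, dist_zero_right, Real.norm_eq_abs] at hε
  have hεM : |ε| * (M + 1) < b t₀ := (lt_div_iff₀ (by linarith)).1 hε
  have hεc : -(ε * c t) ≤ |ε| * M :=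
    calc -(ε * c t) ≤ |ε| * |c t| := (neg_le_abs _).trans (abs_mul _ _).le
      _ ≤ |ε| * M := mul_le_mul_of_nonneg_left (hM t ht) (abs_nonneg ε)
  have hbt : b t₀ ≤ b t := hmin ht
  nlinarith [abs_nonneg ε]

lemma pos_nonneg_of_cooperative {e₁ e₂ a b P Q : ℝ → ℝ} {T : ℝ} (hT : 0 ≤ T)
    (he₁ : ContinuousOn e₁ (Icc 0 T)) (he₂ : ContinuousOn e₂ (Icc 0 T))
    (hac : ContinuousOn a (Icc 0 T)) (hbc : ContinuousOn b (Icc 0 T))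
    (ha : ∀ t ∈ Icc 0 T, 0 ≤ a t) (hb : ∀ t ∈ Icc 0 T, 0 < b t)
    (hP : ∀ t ∈ Icc 0 T, HasDerivWithinAt P (e₁ t * P t + a t * Q t) (Icc 0 T) t)
    (hQ : ∀ t ∈ Icc 0 T, HasDerivWithinAt Q (e₂ t * Q t + b t * P t) (Icc 0 T) t)
    (hP0 : 0 < P 0) (hQ0 : 0 ≤ Q 0) :
    0 < P T ∧ 0 ≤ Q T := by
  -- `(P, Q + ε P)` is again cooperative for small `ε > 0`, and starts in the open quadrant
  have hε : ∀ᶠ ε in 𝓝[>] 0, 0 < P T ∧ 0 < Q T + ε * P T := by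
    have hsmall := eventually_forall_pos_add_mul isCompact_Icc hbc ((he₁.sub he₂).sub hac) hb
    filter_upwards [self_mem_nhdsWithin, nhdsWithin_le_nhds hsmall,
      nhdsWithin_le_nhds (Iio_mem_nhds one_pos)] with ε (hε0 : 0 < ε) hεb (hε1 : ε < 1)
    refine pos_pos_of_cooperative (Q := fun t => Q t + ε * P t)
      (b := fun t => b t + ε * (e₁ t - e₂ t - ε * a t))
      (he₁.sub (hac.const_smul ε)) (he₂.add (hac.const_smul ε)) ha (fun t ht => ?_)
      (fun t ht => (hP t ht).congr_deriv
        (by simp only [Pi.sub_apply, Pi.smul_apply, smul_eq_mul]; ring))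
      (fun t ht => (((hQ t ht).add ((hP t ht).const_mul ε)).congr_deriv
        (by simp only [Pi.add_apply, Pi.smul_apply, smul_eq_mul]; ring)))
      hP0 (by positivity) T (right_mem_Icc.2 hT)
    have hεa : ε * a t ≤ a t := by nlinarith [ha t ht]
    have := hεb t ht
    simp only [Pi.sub_apply] at this
    nlinarith [mul_le_mul_of_nonneg_left hεa hε0.le]
  refine ⟨hε.exists.elim fun _ h => h.1, ge_of_tendsto ?_ (hε.mono fun ε h => h.2.le)⟩
  have hcont : Continuous fun ε : ℝ => Q T + ε * P T := by fun_prop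
  simpa using (hcont.tendsto 0).mono_left nhdsWithin_le_nhds

lemma pos_of_hasDerivWithinAt_eq_mul {f c : ℝ → ℝ} (hc : ContinuousOn c (Ici 0))
    (hf : ∀ t ∈ Ici 0, HasDerivWithinAt f (f t * c t) (Ici 0) t) (h0 : 0 < f 0) :
    ∀ t ∈ Ici 0, 0 < f t := fun T hT =>
  (pos_pos_of_cooperative (e₂ := 0) (a := 0) (b := 0) (Q := fun _ => 1)
    (hc.mono Icc_subset_Ici_self) continuousOn_const (fun _ _ => le_rfl) (fun _ _ => le_rfl)
    (fun t ht => ((hf t ht.1).mono Icc_subset_Ici_self).congr_deriv (by simp [mul_comm]))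
    (fun _ _ => (hasDerivWithinAt_const _ _ _).congr_deriv (by simp))
    h0 one_pos T ⟨hT, le_rfl⟩).1

lemma hasDerivWithinAt_log_of_eq_mul {f : ℝ → ℝ} {c x : ℝ} {s : Set ℝ}
    (hf : HasDerivWithinAt f (f x * c) s x) (hx : f x ≠ 0) :
    HasDerivWithinAt (fun t => Real.log (f t)) c s x :=
  (hf.log hx).congr_deriv (by field_simp)

structure IsLotkaVolterraSolution (α β δ : ℝ) (u v : ℝ → ℝ) : Prop where
  hasDerivWithinAt_u :
    ∀ t ∈ Ici (0 : ℝ), HasDerivWithinAt u (u t * (1 - u t - α * v t)) (Ici 0) t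
  hasDerivWithinAt_v :
    ∀ t ∈ Ici (0 : ℝ), HasDerivWithinAt v (δ * v t * (1 - v t - β * u t)) (Ici 0) t

/-- Log-derivatives of solutions are affine in `(u, v)`, so the derivative of this function is
linear in the differences of two solutions; the weight `δ` makes both coefficients, `β - 1` and
`α - 1`, nonnegative. -/
noncomputable def lyapunov (δ : ℝ) (u₁ v₁ u₂ v₂ : ℝ → ℝ) (t : ℝ) : ℝ :=
  δ * (Real.log (u₂ t) - Real.log (u₁ t)) + (Real.log (v₁ t) - Real.log (v₂ t))

lemma tendsto_lyapunov {δ A B : ℝ} {u₁ v₁ u₂ v₂ : ℝ → ℝ} (hA : 0 < A) (hB : 0 < B)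
    (h₁ : Tendsto (fun t => (u₁ t, v₁ t)) atTop (𝓝 (A, B)))
    (h₂ : Tendsto (fun t => (u₂ t, v₂ t)) atTop (𝓝 (A, B))) :
    Tendsto (lyapunov δ u₁ v₁ u₂ v₂) atTop (𝓝 0) := by
  have hu₁ := h₁.fst_nhds.log hA.ne'
  have hv₁ := h₁.snd_nhds.log hB.ne'
  have hu₂ := h₂.fst_nhds.log hA.ne'
  have hv₂ := h₂.snd_nhds.log hB.ne'
  have h := ((hu₂.sub hu₁).const_mul δ).add (hv₁.sub hv₂)
  rwa [sub_self, sub_self, mul_zero, add_zero] at h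

namespace IsLotkaVolterraSolution

variable {α β δ : ℝ} {u v u₁ v₁ u₂ v₂ : ℝ → ℝ}

lemma continuousOn_u (h : IsLotkaVolterraSolution α β δ u v) : ContinuousOn u (Ici 0) :=
  fun t ht => (h.hasDerivWithinAt_u t ht).continuousWithinAt

lemma continuousOn_v (h : IsLotkaVolterraSolution α β δ u v) : ContinuousOn v (Ici 0) :=
  fun t ht => (h.hasDerivWithinAt_v t ht).continuousWithinAt

lemma u_pos (h : IsLotkaVolterraSolution α β δ u v) (h0 : 0 < u 0) :
    ∀ t ∈ Ici 0, 0 < u t := by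
  have hu := h.continuousOn_u
  have hv := h.continuousOn_v
  exact pos_of_hasDerivWithinAt_eq_mul (by fun_prop) h.hasDerivWithinAt_u h0

lemma v_pos (h : IsLotkaVolterraSolution α β δ u v) (h0 : 0 < v 0) :
    ∀ t ∈ Ici 0, 0 < v t := by
  have hu := h.continuousOn_u
  have hv := h.continuousOn_v
  exact pos_of_hasDerivWithinAt_eq_mul (c := fun t => δ * (1 - v t - β * u t)) (by fun_prop)
    (fun t ht => (h.hasDerivWithinAt_v t ht).congr_deriv (by ring)) h0

/-- The differences `(u₂ - u₁, v₁ - v₂)` solve a cooperative linear system. -/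
lemma order_preserved (h₁ : IsLotkaVolterraSolution α β δ u₁ v₁)
    (h₂ : IsLotkaVolterraSolution α β δ u₂ v₂) (hα : 0 ≤ α) (hβ : 0 < β) (hδ : 0 < δ)
    (hu₁0 : 0 < u₁ 0) (hv₂0 : 0 < v₂ 0) (hu : u₁ 0 < u₂ 0) (hv : v₂ 0 ≤ v₁ 0) :
    ∀ t ∈ Ici 0, u₁ t < u₂ t ∧ v₂ t ≤ v₁ t := by
  intro T hT
  have hsub : Icc 0 T ⊆ Ici 0 := Icc_subset_Ici_self
  have hu₁c := h₁.continuousOn_u.mono hsub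
  have hv₁c := h₁.continuousOn_v.mono hsub
  have hu₂c := h₂.continuousOn_u.mono hsub
  have hv₂c := h₂.continuousOn_v.mono hsub
  have hu₁ := h₁.u_pos hu₁0
  have hv₂ := h₂.v_pos hv₂0
  have key := pos_nonneg_of_cooperative (P := u₂ - u₁) (Q := v₁ - v₂)
    (e₁ := fun t => 1 - u₁ t - u₂ t - α * v₂ t) (e₂ := fun t => δ * (1 - v₁ t - v₂ t - β * u₁ t))
    (a := fun t => α * u₁ t) (b := fun t => δ * β * v₂ t) hT (by fun_prop) (by fun_prop)
    (by fun_prop) (by fun_prop) (fun t ht => mul_nonneg hα (hu₁ t ht.1).le)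
    (fun t ht => by have := hv₂ t ht.1; positivity)
    (fun t ht => (((h₂.hasDerivWithinAt_u t ht.1).sub (h₁.hasDerivWithinAt_u t ht.1)).mono
      hsub).congr_deriv (by simp only [Pi.sub_apply]; ring))
    (fun t ht => (((h₁.hasDerivWithinAt_v t ht.1).sub (h₂.hasDerivWithinAt_v t ht.1)).mono
      hsub).congr_deriv (by simp only [Pi.sub_apply]; ring))
    (sub_pos.2 hu) (sub_nonneg.2 hv)
  exact ⟨sub_pos.1 key.1, sub_nonneg.1 key.2⟩

lemma hasDerivWithinAt_lyapunov (h₁ : IsLotkaVolterraSolution α β δ u₁ v₁)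
    (h₂ : IsLotkaVolterraSolution α β δ u₂ v₂) {t : ℝ} (ht : t ∈ Ici 0)
    (hu₁ : 0 < u₁ t) (hv₁ : 0 < v₁ t) (hu₂ : 0 < u₂ t) (hv₂ : 0 < v₂ t) :
    HasDerivWithinAt (lyapunov δ u₁ v₁ u₂ v₂)
      (δ * ((β - 1) * (u₂ t - u₁ t) + (α - 1) * (v₁ t - v₂ t))) (Ici 0) t := by
  have logv : ∀ {u v : ℝ → ℝ}, IsLotkaVolterraSolution α β δ u v → 0 < v t →
      HasDerivWithinAt (fun s => Real.log (v s)) (δ * (1 - v t - β * u t)) (Ici 0) t :=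
    fun h hv => hasDerivWithinAt_log_of_eq_mul
      ((h.hasDerivWithinAt_v t ht).congr_deriv (by ring)) hv.ne'
  have logu : ∀ {u v : ℝ → ℝ}, IsLotkaVolterraSolution α β δ u v → 0 < u t →
      HasDerivWithinAt (fun s => Real.log (u s)) (1 - u t - α * v t) (Ici 0) t :=
    fun h hu => hasDerivWithinAt_log_of_eq_mul (h.hasDerivWithinAt_u t ht) hu.ne'
  exact ((((logu h₂ hu₂).sub (logu h₁ hu₁)).const_mul δ).add
    ((logv h₁ hv₁).sub (logv h₂ hv₂))).congr_deriv (by ring)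

lemma monotoneOn_lyapunov (h₁ : IsLotkaVolterraSolution α β δ u₁ v₁)
    (h₂ : IsLotkaVolterraSolution α β δ u₂ v₂) (hα : 1 ≤ α) (hβ : 1 ≤ β) (hδ : 0 < δ)
    (hu₁0 : 0 < u₁ 0) (hv₁0 : 0 < v₁ 0) (hu₂0 : 0 < u₂ 0) (hv₂0 : 0 < v₂ 0)
    (hu : u₁ 0 < u₂ 0) (hv : v₂ 0 ≤ v₁ 0) :
    MonotoneOn (lyapunov δ u₁ v₁ u₂ v₂) (Ici 0) := by
  have hderiv : ∀ t ∈ Ici 0, HasDerivWithinAt (lyapunov δ u₁ v₁ u₂ v₂)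
      (δ * ((β - 1) * (u₂ t - u₁ t) + (α - 1) * (v₁ t - v₂ t))) (Ici 0) t := fun t ht =>
    hasDerivWithinAt_lyapunov h₁ h₂ ht (h₁.u_pos hu₁0 t ht) (h₁.v_pos hv₁0 t ht)
      (h₂.u_pos hu₂0 t ht) (h₂.v_pos hv₂0 t ht)
  refine monotoneOn_of_hasDerivWithinAt_nonneg (convex_Ici 0)
    (fun t ht => (hderiv t ht).continuousWithinAt)
    (fun t ht => (hderiv t (interior_subset ht)).mono interior_subset) fun t ht => ?_
  obtain ⟨hut, hvt⟩ := order_preserved h₁ h₂ (by linarith) (by linarith) hδ hu₁0 hv₂0 hu hv t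
    (interior_subset ht)
  have := mul_nonneg (sub_nonneg.2 hβ) (sub_nonneg.2 hut.le)
  have := mul_nonneg (sub_nonneg.2 hα) (sub_nonneg.2 hvt)
  positivity

end IsLotkaVolterraSolution

/-- Monotonicity of the separatrix: if two points `(x₁,y₁)` and `(x₂,y₂)` in
the open first quadrant both lie on the stable manifold of the saddle `(A,B)`
(i.e. their forward solutions converge to `(A,B)`), then `x₁ < x₂` implies
`y₁ < y₂`. -/
theorem stmt_10 (α β δ : ℝ) (hα : 1 < α) (hβ : 1 < β) (hδ : 0 < δ)
    (A B : ℝ) (hA : A = (α - 1) / (α * β - 1)) (hB : B = (β - 1) / (α * β - 1))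
    (x₁ y₁ x₂ y₂ : ℝ) (hx₁ : 0 < x₁) (hy₁ : 0 < y₁) (hx₂ : 0 < x₂) (hy₂ : 0 < y₂)
    (u₁ v₁ : ℝ → ℝ)
    (hu₁ : ∀ t ∈ Set.Ici (0 : ℝ),
      HasDerivWithinAt u₁ (u₁ t * (1 - u₁ t - α * v₁ t)) (Set.Ici 0) t)
    (hv₁ : ∀ t ∈ Set.Ici (0 : ℝ),
      HasDerivWithinAt v₁ (δ * v₁ t * (1 - v₁ t - β * u₁ t)) (Set.Ici 0) t)
    (hu₁0 : u₁ 0 = x₁) (hv₁0 : v₁ 0 = y₁)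
    (hconv₁ : Tendsto (fun t => (u₁ t, v₁ t)) atTop (nhds (A, B)))
    (u₂ v₂ : ℝ → ℝ)
    (hu₂ : ∀ t ∈ Set.Ici (0 : ℝ),
      HasDerivWithinAt u₂ (u₂ t * (1 - u₂ t - α * v₂ t)) (Set.Ici 0) t)
    (hv₂ : ∀ t ∈ Set.Ici (0 : ℝ),
      HasDerivWithinAt v₂ (δ * v₂ t * (1 - v₂ t - β * u₂ t)) (Set.Ici 0) t)
    (hu₂0 : u₂ 0 = x₂) (hv₂0 : v₂ 0 = y₂)
    (hconv₂ : Tendsto (fun t => (u₂ t, v₂ t)) atTop (nhds (A, B)))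
    (hlt : x₁ < x₂) :
    y₁ < y₂ := by
  by_contra! hle
  subst hu₁0 hv₁0 hu₂0 hv₂0
  have hαβ : 0 < α * β - 1 := by nlinarith
  have hA0 : 0 < A := hA ▸ div_pos (by linarith) hαβ
  have hB0 : 0 < B := hB ▸ div_pos (by linarith) hαβ
  have hmono := IsLotkaVolterraSolution.monotoneOn_lyapunov ⟨hu₁, hv₁⟩ ⟨hu₂, hv₂⟩ hα.le hβ.le hδ
    hx₁ hy₁ hx₂ hy₂ hlt hle
  have hV0 : 0 < lyapunov δ u₁ v₁ u₂ v₂ 0 := by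
    have := mul_pos hδ (sub_pos.2 (Real.log_lt_log hx₁ hlt))
    have := sub_nonneg.2 (Real.log_le_log hy₂ hle)
    unfold lyapunov
    linarith
  have hV0_le : lyapunov δ u₁ v₁ u₂ v₂ 0 ≤ 0 :=
    ge_of_tendsto (tendsto_lyapunov hA0 hB0 hconv₁ hconv₂)
      (eventually_atTop.2 ⟨0, fun t ht => hmono self_mem_Ici ht ht⟩)
  exact hV0.not_ge hV0_le
end

section
/- Let α>1, β>1, δ>0, A=(α-1)/(αβ-1), B=(β-1)/(αβ-1). If (x(t),y(t)) is a solution of the system dx/dt = x(1-x-αy), dy/dt = δy(1-y-βx) on [0,∞) with x(0)>0, y(0)>0 and (x(t),y(t))→(A,B) as t→∞, then the function t ↦ (α−1)y(t) − (β−1)x(t) is integrable on [0,∞); i.e., the improper integral ∫₀^∞ ((α−1)y(τ) − (β−1)x(τ)) dτ converges. -/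
/-!
Write the system in the coordinates `P = 1 - x - α y`, `Q = 1 - y - β x`, which vanish at the
saddle `(A, B)`, and diagonalise the linear part: the eigen-coordinates `u` (rate `l₁ < 0`) and
`w` (rate `l₂ > 0`) satisfy `u' = l₁ u + o(|u| + |w|)`, `w' = l₂ w + o(|u| + |w|)`. Along a
solution converging to the saddle, `w² - u²` would grow exponentially if it ever became positive,
so `|w| ≤ |u|`, and then `u²` decays exponentially. Hence so do `P`, `Q` and the integrand
`(α - 1) y - (β - 1) x = Q - P`, which is therefore integrable.
-/

open Filter MeasureTheory Set Asymptotics Real Topology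

theorem monotoneOn_exp_mul_of_mul_le_deriv {f f' : ℝ → ℝ} {c T : ℝ}
    (hf : ∀ t ∈ Ici T, HasDerivAt f (f' t) t) (hle : ∀ t ∈ Ici T, c * f t ≤ f' t) :
    MonotoneOn (fun t => exp (-(c * t)) * f t) (Ici T) := by
  have hd : ∀ t ∈ Ici T, HasDerivAt (fun s => exp (-(c * s)) * f s)
      (exp (-(c * t)) * (f' t - c * f t)) t := fun t ht =>
    ((((hasDerivAt_id t).const_mul c).neg.exp).mul (hf t ht)).congr_deriv (by simp only [id_eq, Pi.neg_apply, mul_one, mul_neg, neg_mul]; ring)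
  refine monotoneOn_of_hasDerivWithinAt_nonneg (convex_Ici T)
    (fun t ht => (hd t ht).continuousAt.continuousWithinAt)
    (fun t ht => (hd t (interior_subset ht)).hasDerivWithinAt) fun t ht => ?_
  have := hle t (interior_subset ht)
  exact mul_nonneg (exp_pos _).le (by linarith)

theorem nonpos_of_mul_le_deriv_of_tendsto_zero {f f' : ℝ → ℝ} {c T : ℝ} (hc : 0 < c)
    (hf : ∀ t ∈ Ici T, HasDerivAt f (f' t) t) (hle : ∀ t ∈ Ici T, c * f t ≤ f' t)
    (hlim : Tendsto f atTop (𝓝 0)) : ∀ t ∈ Ici T, f t ≤ 0 := by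
  intro t ht
  have hmono := monotoneOn_exp_mul_of_mul_le_deriv hf hle
  have hexp : Tendsto (fun s => exp (-(c * s))) atTop (𝓝 0) :=
    tendsto_exp_atBot.comp (tendsto_neg_atTop_atBot.comp (tendsto_id.const_mul_atTop hc))
  have hprod : exp (-(c * t)) * f t ≤ 0 :=
    ge_of_tendsto (by simpa using hexp.mul hlim)
      ((eventually_ge_atTop t).mono fun s hs => hmono ht (mem_Ici.2 (ht.trans hs)) hs)
  exact nonpos_of_mul_nonpos_right hprod (exp_pos _)

theorem le_mul_exp_of_deriv_le_neg_mul {f f' : ℝ → ℝ} {c T : ℝ}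
    (hf : ∀ t ∈ Ici T, HasDerivAt f (f' t) t) (hle : ∀ t ∈ Ici T, f' t ≤ -(c * f t)) :
    ∀ t ∈ Ici T, f t ≤ f T * exp (-(c * (t - T))) := by
  intro t ht
  have hmono := monotoneOn_exp_mul_of_mul_le_deriv (c := -c) (f := fun s => -f s)
    (fun s hs => (hf s hs).neg) fun s hs => by linarith [hle s hs]
  have hTt : exp (c * T) * -f T ≤ exp (c * t) * -f t := by
    simpa using hmono self_mem_Ici ht ht
  calc f t = exp (-(c * t)) * (exp (c * t) * f t) := by
        rw [← mul_assoc, ← exp_add]; simp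
    _ ≤ exp (-(c * t)) * (exp (c * T) * f T) :=
        mul_le_mul_of_nonneg_left (by linarith) (exp_pos _).le
    _ = f T * exp (-(c * (t - T))) := by
        rw [show -(c * (t - T)) = -(c * t) + c * T by ring, exp_add]; ring

section Saddle

variable {u w Ru Rw : ℝ → ℝ} {l₁ l₂ μ T : ℝ}

theorem abs_le_abs_of_saddle (hμ : 0 < μ) (hμ₁ : μ ≤ -l₁) (hμ₂ : μ ≤ l₂)
    (hu : ∀ t ∈ Ici T, HasDerivAt u (l₁ * u t + Ru t) t)
    (hw : ∀ t ∈ Ici T, HasDerivAt w (l₂ * w t + Rw t) t)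
    (hRu : ∀ t ∈ Ici T, |Ru t| ≤ μ / 4 * (|u t| + |w t|))
    (hRw : ∀ t ∈ Ici T, |Rw t| ≤ μ / 4 * (|u t| + |w t|))
    (hu0 : Tendsto u atTop (𝓝 0)) (hw0 : Tendsto w atTop (𝓝 0)) :
    ∀ t ∈ Ici T, |w t| ≤ |u t| := by
  -- `V = w² - u²` satisfies `V' ≥ μ V` and tends to `0`, so it cannot become positive.
  have hV : ∀ t ∈ Ici T, HasDerivAt (fun s => w s ^ 2 - u s ^ 2)
      (2 * w t * (l₂ * w t + Rw t) - 2 * u t * (l₁ * u t + Ru t)) t := fun t ht =>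
    (((hw t ht).pow 2).sub ((hu t ht).pow 2)).congr_deriv (by simp)
  have hV' : ∀ t ∈ Ici T, μ * (w t ^ 2 - u t ^ 2) ≤
      2 * w t * (l₂ * w t + Rw t) - 2 * u t * (l₁ * u t + Ru t) := by
    intro t ht
    have huR := abs_le.1 ((abs_mul _ _).trans_le
      (mul_le_mul_of_nonneg_left (hRu t ht) (abs_nonneg (u t))))
    have hwR := abs_le.1 ((abs_mul _ _).trans_le
      (mul_le_mul_of_nonneg_left (hRw t ht) (abs_nonneg (w t))))
    have hu2 : μ * u t ^ 2 ≤ -l₁ * u t ^ 2 := by gcongr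
    have hw2 : μ * w t ^ 2 ≤ l₂ * w t ^ 2 := by gcongr
    nlinarith [sq_abs (u t), sq_abs (w t), sq_nonneg (|u t| - |w t|)]
  have hV0 : Tendsto (fun s => w s ^ 2 - u s ^ 2) atTop (𝓝 0) := by
    simpa using (hw0.pow 2).sub (hu0.pow 2)
  intro t ht
  exact sq_le_sq.1 (by linarith [nonpos_of_mul_le_deriv_of_tendsto_zero hμ hV hV' hV0 t ht])

theorem sq_le_mul_exp_of_saddle (hμ : 0 < μ) (hμ₁ : μ ≤ -l₁)
    (hu : ∀ t ∈ Ici T, HasDerivAt u (l₁ * u t + Ru t) t)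
    (hRu : ∀ t ∈ Ici T, |Ru t| ≤ μ / 4 * (|u t| + |w t|))
    (hwu : ∀ t ∈ Ici T, |w t| ≤ |u t|) :
    ∀ t ∈ Ici T, u t ^ 2 ≤ u T ^ 2 * exp (-(μ * (t - T))) := by
  refine le_mul_exp_of_deriv_le_neg_mul (f' := fun t => 2 * u t * (l₁ * u t + Ru t))
    (fun t ht => ((hu t ht).pow 2).congr_deriv (by simp)) fun t ht => ?_
  have huR := abs_le.1 ((abs_mul _ _).trans_le
    (mul_le_mul_of_nonneg_left (hRu t ht) (abs_nonneg (u t))))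
  have hu2 : μ * u t ^ 2 ≤ -l₁ * u t ^ 2 := by gcongr
  have hwu' : μ * |w t| ≤ μ * |u t| := mul_le_mul_of_nonneg_left (hwu t ht) hμ.le
  nlinarith [sq_abs (u t), abs_nonneg (u t)]

theorem isBigO_exp_of_saddle (hμ : 0 < μ) (hμ₁ : μ ≤ -l₁) (hμ₂ : μ ≤ l₂)
    (hu : ∀ᶠ t in atTop, HasDerivAt u (l₁ * u t + Ru t) t)
    (hw : ∀ᶠ t in atTop, HasDerivAt w (l₂ * w t + Rw t) t)
    (hRu : Ru =o[atTop] fun t => |u t| + |w t|) (hRw : Rw =o[atTop] fun t => |u t| + |w t|)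
    (hu0 : Tendsto u atTop (𝓝 0)) (hw0 : Tendsto w atTop (𝓝 0)) :
    (fun t => |u t| + |w t|) =O[atTop] fun t => exp (-(μ / 2) * t) := by
  have hμ4 : 0 < μ / 4 := by positivity
  obtain ⟨T, hT⟩ := eventually_atTop.1 (hu.and (hw.and ((hRu.bound hμ4).and (hRw.bound hμ4))))
  have hnorm (t : ℝ) : ‖|u t| + |w t|‖ = |u t| + |w t| := abs_of_nonneg (by positivity)
  have hRu' : ∀ t ∈ Ici T, |Ru t| ≤ μ / 4 * (|u t| + |w t|) := fun t ht => by
    simpa only [hnorm, Real.norm_eq_abs] using (hT t ht).2.2.1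
  have hRw' : ∀ t ∈ Ici T, |Rw t| ≤ μ / 4 * (|u t| + |w t|) := fun t ht => by
    simpa only [hnorm, Real.norm_eq_abs] using (hT t ht).2.2.2
  have hwu := abs_le_abs_of_saddle hμ hμ₁ hμ₂ (fun t ht => (hT t ht).1)
    (fun t ht => (hT t ht).2.1) hRu' hRw' hu0 hw0
  have hsq := sq_le_mul_exp_of_saddle hμ hμ₁ (fun t ht => (hT t ht).1) hRu' hwu
  refine IsBigO.of_bound (2 * |u T| * exp (μ / 2 * T)) ((eventually_ge_atTop T).mono fun t ht => ?_)
  have hut : |u t| ≤ |u T| * exp (-(μ / 2 * (t - T))) := by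
    refine abs_le_of_sq_le_sq ((hsq t ht).trans_eq ?_) (by positivity)
    rw [mul_pow, sq_abs, ← exp_nat_mul]
    ring_nf
  rw [hnorm, Real.norm_of_nonneg (exp_pos _).le]
  calc |u t| + |w t| ≤ 2 * (|u T| * exp (-(μ / 2 * (t - T)))) := by linarith [hwu t ht]
    _ = 2 * |u T| * exp (μ / 2 * T) * exp (-(μ / 2) * t) := by
      rw [mul_assoc _ (exp _), ← exp_add]; ring_nf

end Saddle

/-- `(1, θᵢ)` is a left eigenvector of `!![a, b; c, d]` with eigenvalue `lᵢ`. -/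
theorem exists_left_eigenvectors_of_det_neg {a b c d : ℝ} (hc : c ≠ 0) (hdet : a * d - b * c < 0) :
    ∃ θ₁ θ₂ l₁ l₂ : ℝ, θ₁ ≠ θ₂ ∧ l₁ < 0 ∧ 0 < l₂ ∧ a + θ₁ * c = l₁ ∧ b + θ₁ * d = l₁ * θ₁ ∧
      a + θ₂ * c = l₂ ∧ b + θ₂ * d = l₂ * θ₂ := by
  set s := √((a + d) ^ 2 - 4 * (a * d - b * c))
  have hs : s ^ 2 = (a + d) ^ 2 - 4 * (a * d - b * c) := sq_sqrt (by nlinarith)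
  have hs0 : 0 ≤ s := sqrt_nonneg _
  obtain ⟨hs₁, hs₂⟩ := abs_lt.1 (abs_lt_of_sq_lt_sq (a := a + d) (by linarith) hs0)
  refine ⟨(d - a - s) / (2 * c), (d - a + s) / (2 * c), (a + d - s) / 2, (a + d + s) / 2,
    ?_, by linarith, by linarith, ?_, ?_, ?_, ?_⟩
  · rw [Ne, div_left_inj' (by positivity)]
    intro h
    linarith
  all_goals field_simp
  · ring
  · linear_combination -hs
  · ring
  · linear_combination -hs

theorem abs_add_abs_le_of_ne {θ₁ θ₂ : ℝ} (h : θ₁ ≠ θ₂) (p q : ℝ) :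
    |p| + |q| ≤ (|θ₁| + |θ₂| + 2) / |θ₁ - θ₂| * (|p + θ₁ * q| + |p + θ₂ * q|) := by
  rw [div_mul_eq_mul_div, le_div_iff₀ (abs_pos.2 (sub_ne_zero.2 h))]
  have hp : |p| * |θ₁ - θ₂| ≤ |θ₁| * |p + θ₂ * q| + |θ₂| * |p + θ₁ * q| := by
    rw [← abs_mul, ← abs_mul, ← abs_mul,
      show p * (θ₁ - θ₂) = θ₁ * (p + θ₂ * q) - θ₂ * (p + θ₁ * q) by ring]
    exact abs_sub _ _
  have hq : |q| * |θ₁ - θ₂| ≤ |p + θ₁ * q| + |p + θ₂ * q| := by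
    rw [← abs_mul, show q * (θ₁ - θ₂) = (p + θ₁ * q) - (p + θ₂ * q) by ring]
    exact abs_sub _ _
  nlinarith [mul_nonneg (abs_nonneg θ₁) (abs_nonneg (p + θ₁ * q)),
    mul_nonneg (abs_nonneg θ₂) (abs_nonneg (p + θ₂ * q)), abs_nonneg (p + θ₁ * q),
    abs_nonneg (p + θ₂ * q)]

theorem hasDerivAt_add_mul_of_left_eigen {P Q r₁ r₂ : ℝ → ℝ} {a b c d θ l t : ℝ}
    (hl : a + θ * c = l) (hlθ : b + θ * d = l * θ)
    (hP : HasDerivAt P (a * P t + b * Q t + r₁ t) t)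
    (hQ : HasDerivAt Q (c * P t + d * Q t + r₂ t) t) :
    HasDerivAt (fun s => P s + θ * Q s) (l * (P t + θ * Q t) + (r₁ t + θ * r₂ t)) t :=
  (hP.add (hQ.const_mul θ)).congr_deriv (by linear_combination P t * hl + Q t * hlθ)

theorem isBigO_exp_of_tendsto_of_det_neg {a b c d : ℝ} (hc : c ≠ 0) (hdet : a * d - b * c < 0)
    {P Q r₁ r₂ : ℝ → ℝ}
    (hP : ∀ᶠ t in atTop, HasDerivAt P (a * P t + b * Q t + r₁ t) t)
    (hQ : ∀ᶠ t in atTop, HasDerivAt Q (c * P t + d * Q t + r₂ t) t)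
    (hr₁ : r₁ =o[atTop] fun t => |P t| + |Q t|) (hr₂ : r₂ =o[atTop] fun t => |P t| + |Q t|)
    (hP0 : Tendsto P atTop (𝓝 0)) (hQ0 : Tendsto Q atTop (𝓝 0)) :
    ∃ μ > 0, (fun t => |P t| + |Q t|) =O[atTop] fun t => exp (-μ * t) := by
  obtain ⟨θ₁, θ₂, l₁, l₂, hθ, hl₁, hl₂, h₁, h₁', h₂, h₂'⟩ :=
    exists_left_eigenvectors_of_det_neg hc hdet
  have hPQ : (fun t => |P t| + |Q t|) =O[atTop]
      fun t => |P t + θ₁ * Q t| + |P t + θ₂ * Q t| :=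
    isBigO_of_le' _ fun t => by
      simpa only [Real.norm_eq_abs, abs_of_nonneg (by positivity : 0 ≤ |P t| + |Q t|),
        abs_of_nonneg (by positivity : 0 ≤ |P t + θ₁ * Q t| + |P t + θ₂ * Q t|)]
        using abs_add_abs_le_of_ne hθ (P t) (Q t)
  have hμ : 0 < min (-l₁) l₂ := lt_min (by linarith) hl₂
  refine ⟨min (-l₁) l₂ / 2, by positivity, hPQ.trans ?_⟩
  exact isBigO_exp_of_saddle (Ru := fun t => r₁ t + θ₁ * r₂ t) (Rw := fun t => r₁ t + θ₂ * r₂ t)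
    hμ (min_le_left _ _) (min_le_right _ _)
    ((hP.and hQ).mono fun t h => hasDerivAt_add_mul_of_left_eigen h₁ h₁' h.1 h.2)
    ((hP.and hQ).mono fun t h => hasDerivAt_add_mul_of_left_eigen h₂ h₂' h.1 h.2)
    ((hr₁.add (hr₂.const_mul_left θ₁)).trans_isBigO hPQ)
    ((hr₁.add (hr₂.const_mul_left θ₂)).trans_isBigO hPQ)
    (by simpa using hP0.add (hQ0.const_mul θ₁)) (by simpa using hP0.add (hQ0.const_mul θ₂))

theorem isLittleO_mul_add_mul {ι : Type*} {l : Filter ι} {f g p q : ι → ℝ}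
    (hf : Tendsto f l (𝓝 0)) (hg : Tendsto g l (𝓝 0)) :
    (fun t => f t * p t + g t * q t) =o[l] fun t => |p t| + |q t| := by
  have hnorm (t : ι) : ‖|p t| + |q t|‖ = |p t| + |q t| := abs_of_nonneg (by positivity)
  have hp : p =O[l] fun t => |p t| + |q t| :=
    isBigO_of_le _ fun t => by simp only [hnorm, Real.norm_eq_abs]; linarith [abs_nonneg (q t)]
  have hq : q =O[l] fun t => |p t| + |q t| :=
    isBigO_of_le _ fun t => by simp only [hnorm, Real.norm_eq_abs]; linarith [abs_nonneg (p t)]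
  simpa only [one_mul] using (((isLittleO_one_iff ℝ).2 hf).mul_isBigO hp).add
    (((isLittleO_one_iff ℝ).2 hg).mul_isBigO hq)

theorem lotkaVolterra_equilibrium {α β A B : ℝ} (hα : 1 < α) (hβ : 1 < β)
    (hA : A = (α - 1) / (α * β - 1)) (hB : B = (β - 1) / (α * β - 1)) :
    0 < A ∧ 0 < B ∧ A + α * B = 1 ∧ B + β * A = 1 := by
  have hαβ : 0 < α * β - 1 := by nlinarith
  subst hA hB
  refine ⟨div_pos (by linarith) hαβ, div_pos (by linarith) hαβ, ?_, ?_⟩ <;>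
    rw [mul_div_assoc', ← add_div, div_eq_one_iff_eq hαβ.ne'] <;> ring

theorem isBigO_exp_of_tendsto_lotkaVolterra {α β δ A B : ℝ} (hαβ : 1 < α * β) (hδ : 0 < δ)
    (hA : 0 < A) (hB : 0 < B) (hAB : A + α * B = 1) (hBA : B + β * A = 1) {x y : ℝ → ℝ}
    (hx : ∀ᶠ t in atTop, HasDerivAt x (x t * (1 - x t - α * y t)) t)
    (hy : ∀ᶠ t in atTop, HasDerivAt y (δ * y t * (1 - y t - β * x t)) t)
    (hxA : Tendsto x atTop (𝓝 A)) (hyB : Tendsto y atTop (𝓝 B)) :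
    ∃ μ > 0, (fun t => |1 - x t - α * y t| + |1 - y t - β * x t|) =O[atTop]
      fun t => exp (-μ * t) := by
  -- `P' = -x P - α δ y Q` and `Q' = -β x P - δ y Q`; the linear part freezes `x = A`, `y = B`.
  have hx0 : Tendsto (fun t => A - x t) atTop (𝓝 0) := by simpa using hxA.const_sub A
  have hy0 : Tendsto (fun t => B - y t) atTop (𝓝 0) := by simpa using hyB.const_sub B
  have hP0 : Tendsto (fun t => 1 - x t - α * y t) atTop (𝓝 0) := by
    convert (hxA.const_sub 1).sub (hyB.const_mul α) using 2; linarith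
  have hQ0 : Tendsto (fun t => 1 - y t - β * x t) atTop (𝓝 0) := by
    convert (hyB.const_sub 1).sub (hxA.const_mul β) using 2; linarith
  refine isBigO_exp_of_tendsto_of_det_neg (a := -A) (b := -(α * δ * B)) (c := -(β * A))
    (d := -(δ * B)) (r₁ := fun t => (A - x t) * (1 - x t - α * y t) +
      α * δ * (B - y t) * (1 - y t - β * x t))
    (r₂ := fun t => β * (A - x t) * (1 - x t - α * y t) + δ * (B - y t) * (1 - y t - β * x t))
    (neg_ne_zero.2 (mul_ne_zero (right_ne_zero_of_mul (one_pos.trans hαβ).ne') hA.ne'))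
    (by nlinarith [mul_pos (mul_pos (mul_pos hδ hA) hB) (sub_pos.2 hαβ)])
    ((hx.and hy).mono fun t h =>
      (((hasDerivAt_const t 1).sub h.1).sub (h.2.const_mul α)).congr_deriv (by ring))
    ((hx.and hy).mono fun t h =>
      (((hasDerivAt_const t 1).sub h.2).sub (h.1.const_mul β)).congr_deriv (by ring))
    (isLittleO_mul_add_mul hx0 (by simpa using hy0.const_mul (α * δ)))
    (isLittleO_mul_add_mul (by simpa using hx0.const_mul β) (by simpa using hy0.const_mul δ))
    hP0 hQ0

theorem stmt_12_general (α β δ : ℝ) (hα : 1 < α) (hβ : 1 < β) (hδ : 0 < δ)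
    (A B : ℝ) (hA : A = (α - 1) / (α * β - 1)) (hB : B = (β - 1) / (α * β - 1))
    (x y : ℝ → ℝ)
    (hx : ∀ t ∈ Set.Ici (0 : ℝ),
      HasDerivWithinAt x (x t * (1 - x t - α * y t)) (Set.Ici 0) t)
    (hy : ∀ t ∈ Set.Ici (0 : ℝ),
      HasDerivWithinAt y (δ * y t * (1 - y t - β * x t)) (Set.Ici 0) t)
    (hconv : Tendsto (fun t => (x t, y t)) atTop (nhds (A, B))) :
    IntegrableOn (fun τ => (α - 1) * y τ - (β - 1) * x τ) (Set.Ici 0) := by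
  obtain ⟨hA0, hB0, hAB, hBA⟩ := lotkaVolterra_equilibrium hα hβ hA hB
  obtain ⟨μ, hμ, hO⟩ := isBigO_exp_of_tendsto_lotkaVolterra (by nlinarith) hδ hA0 hB0 hAB hBA
    ((eventually_gt_atTop 0).mono fun t ht => (hx t ht.le).hasDerivAt (Ici_mem_nhds ht))
    ((eventually_gt_atTop 0).mono fun t ht => (hy t ht.le).hasDerivAt (Ici_mem_nhds ht))
    ((continuous_fst.tendsto _).comp hconv) ((continuous_snd.tendsto _).comp hconv)
  have hcont : ContinuousOn (fun τ => (α - 1) * y τ - (β - 1) * x τ) (Ici 0) :=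
    (continuousOn_const.mul fun t ht => (hy t ht).continuousWithinAt).sub
      (continuousOn_const.mul fun t ht => (hx t ht).continuousWithinAt)
  rw [integrableOn_Ici_iff_integrableOn_Ioi]
  refine integrable_of_isBigO_exp_neg hμ hcont ((isBigO_of_le _ fun t => ?_).trans hO)
  rw [Real.norm_eq_abs, Real.norm_of_nonneg (by positivity),
    show (α - 1) * y t - (β - 1) * x t = (1 - y t - β * x t) - (1 - x t - α * y t) by ring]
  exact (abs_sub _ _).trans_eq (add_comm _ _)

/-- Along a solution on the stable manifold of `(A,B)` (positive initial
conditions, forward convergence to `(A,B)`), the function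
`τ ↦ (α-1) * y τ - (β-1) * x τ` is integrable on `[0,∞)`, i.e. the improper
integral `∫₀^∞ ((α-1) y - (β-1) x)` converges. -/
theorem stmt_12 (α β δ : ℝ) (hα : 1 < α) (hβ : 1 < β) (hδ : 0 < δ)
    (A B : ℝ) (hA : A = (α - 1) / (α * β - 1)) (hB : B = (β - 1) / (α * β - 1))
    (x y : ℝ → ℝ)
    (hx : ∀ t ∈ Set.Ici (0 : ℝ),
      HasDerivWithinAt x (x t * (1 - x t - α * y t)) (Set.Ici 0) t)
    (hy : ∀ t ∈ Set.Ici (0 : ℝ),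
      HasDerivWithinAt y (δ * y t * (1 - y t - β * x t)) (Set.Ici 0) t)
    (hx0 : 0 < x 0) (hy0 : 0 < y 0)
    (hconv : Tendsto (fun t => (x t, y t)) atTop (nhds (A, B))) :
    IntegrableOn (fun τ => (α - 1) * y τ - (β - 1) * x τ) (Set.Ici 0) :=
  stmt_12_general α β δ hα hβ hδ A B hA hB x y hx hy hconv
end

section
/- Let α>1, β>1 and δ=1, and set A=(α-1)/(αβ-1), B=(β-1)/(αβ-1). If (x(t),y(t)) is a solution of the system dx/dt = x(1-x-αy), dy/dt = y(1-y-βx) on [0,∞) with x(0)=x₀>0 and y(0)=(B/A)·x₀, then y(t)=(B/A)·x(t) for all t≥0, and (x(t),y(t))→(A,B) as t→∞. In particular, when δ=1 the separatrix is the straight line y=(B/A)x, i.e., s(x)=s*(x)=B·(x/A)^δ. -/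
/-!
Write `k = B / A = (β - 1) / (α - 1)`. Along any solution, `w = y - k x` satisfies a linear
equation `w' = c(t) w`, because `k (α - 1) = β - 1`; an integrating factor shows that `w`
stays `0` once it starts at `0`. On the line `y = k x` the equation for `x` becomes the logistic
equation `x' = x (1 - x / A)`, since `A + α B = 1`. For that equation
`x (1 + (A / x₀ - 1) e^{-t}) - A` again satisfies a linear equation and vanishes at `0`, which gives
the explicit solution `x = A / (1 + (A / x₀ - 1) e^{-t}) → A`.
-/

open Filter Set Topology Real

theorem ContinuousOn.exists_hasDerivWithinAt_Ici {c : ℝ → ℝ} {a : ℝ}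
    (hc : ContinuousOn c (Ici a)) :
    ∃ C : ℝ → ℝ, ∀ t ∈ Ici a, HasDerivWithinAt C (c t) (Ici a) t := by
  have hext : Continuous fun t => c (max t a) :=
    hc.comp_continuous (continuous_id.max continuous_const) fun t => le_max_right t a
  refine ⟨fun t => ∫ s in a..t, c (max s a), fun t ht => ?_⟩
  have := (hext.integral_hasStrictDerivAt a t).hasDerivAt.hasDerivWithinAt (s := Ici a)
  rwa [max_eq_left ht] at this

theorem eqOn_zero_of_hasDerivWithinAt_mul {c g : ℝ → ℝ} {a : ℝ} (hc : ContinuousOn c (Ici a))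
    (hg : ∀ t ∈ Ici a, HasDerivWithinAt g (c t * g t) (Ici a) t) (ha : g a = 0) :
    EqOn g 0 (Ici a) := by
  obtain ⟨C, hC⟩ := hc.exists_hasDerivWithinAt_Ici
  have hfactor : ∀ t ∈ Ici a,
      HasDerivWithinAt (fun t => g t * exp (-C t)) 0 (Ici a) t := by
    intro t ht
    refine ((hg t ht).fun_mul (hC t ht).fun_neg.exp).congr_deriv ?_
    ring
  intro t ht
  have := (convex_Ici a).norm_image_sub_le_of_norm_hasDerivWithin_le hfactor
    (fun _ _ => norm_zero.le) self_mem_Ici ht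
  simp only [ha, zero_mul, sub_zero, norm_mul, norm_eq_abs, abs_exp] at this
  exact abs_nonpos_iff.mp (nonpos_of_mul_nonpos_left this (exp_pos _))

theorem eq_const_mul_of_lotkaVolterra {α β k a : ℝ} {x y : ℝ → ℝ} (hk : k * (α - 1) = β - 1)
    (hx : ∀ t ∈ Ici a, HasDerivWithinAt x (x t * (1 - x t - α * y t)) (Ici a) t)
    (hy : ∀ t ∈ Ici a, HasDerivWithinAt y (y t * (1 - y t - β * x t)) (Ici a) t)
    (ha : y a = k * x a) :
    ∀ t ∈ Ici a, y t = k * x t := by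
  have hxc : ContinuousOn x (Ici a) := fun t ht => (hx t ht).continuousWithinAt
  have hyc : ContinuousOn y (Ici a) := fun t ht => (hy t ht).continuousWithinAt
  have hw := eqOn_zero_of_hasDerivWithinAt_mul
    (c := fun t => 1 - y t - k * x t - β * x t + α * k * x t) (g := fun t => y t - k * x t)
    (by fun_prop) (fun t ht => ((hy t ht).sub ((hx t ht).const_mul k)).congr_deriv
      (by linear_combination (k * x t ^ 2) * hk)) (sub_eq_zero.mpr ha)
  exact fun t ht => sub_eq_zero.mp (hw ht)

theorem logistic_eq {A : ℝ} {x : ℝ → ℝ} (hA : A ≠ 0) (hx0 : x 0 ≠ 0)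
    (hx : ∀ t ∈ Ici (0 : ℝ), HasDerivWithinAt x (x t * (1 - x t / A)) (Ici 0) t) :
    ∀ t ∈ Ici (0 : ℝ), x t = A / (1 + (A / x 0 - 1) * exp (-t)) := by
  set c := A / x 0 - 1
  have hxc : ContinuousOn x (Ici 0) := fun t ht => (hx t ht).continuousWithinAt
  have hexp (t : ℝ) : HasDerivAt (fun t => 1 + c * exp (-t)) (c * (exp (-t) * -1)) t :=
    ((hasDerivAt_neg t).exp.const_mul c).const_add 1
  have hq := eqOn_zero_of_hasDerivWithinAt_mul
    (c := fun t => -(x t / A)) (g := fun t => x t * (1 + c * exp (-t)) - A)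
    (by fun_prop) (fun t ht => (((hx t ht).mul (hexp t).hasDerivWithinAt).sub_const A).congr_deriv
      (by field_simp; ring)) (by simp only [c, neg_zero, exp_zero]; field_simp; ring)
  intro t ht
  have hprod : x t * (1 + c * exp (-t)) = A := sub_eq_zero.mp (hq ht)
  have hD : 1 + c * exp (-t) ≠ 0 := fun h => hA (by rw [← hprod, h, mul_zero])
  exact eq_div_of_mul_eq hD hprod

theorem tendsto_logistic {A : ℝ} {x : ℝ → ℝ} (hA : A ≠ 0) (hx0 : x 0 ≠ 0)
    (hx : ∀ t ∈ Ici (0 : ℝ), HasDerivWithinAt x (x t * (1 - x t / A)) (Ici 0) t) :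
    Tendsto x atTop (𝓝 A) := by
  have hD : Tendsto (fun t => 1 + (A / x 0 - 1) * exp (-t)) atTop (𝓝 1) := by
    simpa using (tendsto_exp_neg_atTop_nhds_zero.const_mul (A / x 0 - 1)).const_add 1
  have hlim : Tendsto (fun t => A / (1 + (A / x 0 - 1) * exp (-t))) atTop (𝓝 A) := by
    have h := tendsto_const_nhds.div hD one_ne_zero (f := fun _ => A)
    rwa [div_one] at h
  refine hlim.congr' ?_
  filter_upwards [eventually_ge_atTop 0] with t ht
  exact (logistic_eq hA hx0 hx t ht).symm

/-- For `δ = 1` the separatrix is the straight line `y = (B/A) x`: a forward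
solution starting on this line with `x₀ > 0` stays on it and converges to the
saddle `(A,B)`. -/
theorem stmt_14 (α β : ℝ) (hα : 1 < α) (hβ : 1 < β)
    (A B : ℝ) (hA : A = (α - 1) / (α * β - 1)) (hB : B = (β - 1) / (α * β - 1))
    (x₀ : ℝ) (hx₀ : 0 < x₀)
    (x y : ℝ → ℝ)
    (hx : ∀ t ∈ Set.Ici (0 : ℝ),
      HasDerivWithinAt x (x t * (1 - x t - α * y t)) (Set.Ici 0) t)
    (hy : ∀ t ∈ Set.Ici (0 : ℝ),
      HasDerivWithinAt y (y t * (1 - y t - β * x t)) (Set.Ici 0) t)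
    (hx0 : x 0 = x₀) (hy0 : y 0 = (B / A) * x₀) :
    (∀ t : ℝ, 0 ≤ t → y t = (B / A) * x t) ∧
    Tendsto (fun t => (x t, y t)) atTop (nhds (A, B)) := by
  have hden : α * β - 1 ≠ 0 := by nlinarith
  have hα1 : α - 1 ≠ 0 := by linarith
  have hA0 : A ≠ 0 := by rw [hA]; exact div_ne_zero hα1 hden
  have hk : B / A * (α - 1) = β - 1 := by
    rw [hA, hB, div_div_div_cancel_right₀ hden, div_mul_cancel₀ _ hα1]
  have hαk : α * (B / A) = 1 / A - 1 := by
    rw [hA, hB, div_div_div_cancel_right₀ hden]; field_simp; ring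
  have hline := eq_const_mul_of_lotkaVolterra hk hx hy (by rw [hx0, hy0])
  have hlogistic : ∀ t ∈ Ici (0 : ℝ), HasDerivWithinAt x (x t * (1 - x t / A)) (Ici 0) t :=
    fun t ht => (hx t ht).congr_deriv (by
      rw [hline t ht]; linear_combination -x t ^ 2 * hαk)
  have hxlim := tendsto_logistic hA0 (hx0 ▸ hx₀.ne') hlogistic
  have hylim : Tendsto y atTop (𝓝 B) := by
    have hkx := hxlim.const_mul (B / A)
    rw [div_mul_cancel₀ B hA0] at hkx
    refine hkx.congr' ?_
    filter_upwards [eventually_ge_atTop 0] with t ht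
    exact (hline t ht).symm
  exact ⟨hline, hxlim.prodMk_nhds hylim⟩
end

section
/- Fix β>1, δ>0 and x₀>0, and let 1<α₁<α₂. For i=1,2 set A_i=(α_i−1)/(α_iβ−1), B_i=(β−1)/(α_iβ−1), and let y_i>0 be the unique value such that the solution of the system dx/dt = x(1−x−α_i y), dy/dt = δy(1−y−βx) on [0,∞) with initial condition (x₀,y_i) converges to (A_i,B_i) as t→∞. Then y₂<y₁; that is, for each fixed x>0 the separatrix value s(x,α) is strictly decreasing in α. -/
/-!
Suppose `y₁ ≤ y₂`. In the variables `(x, -y)` the competition system is cooperative, and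
raising `α` only lowers `x'`; so the comparison principle for cooperative systems keeps
`x₂ ≤ x₁` and `y₁ ≤ y₂` for all time, the two differences being controlled by Grönwall's
inequality applied to the sum of their positive parts. Letting `t → ∞` gives `A₂ ≤ A₁`,
whereas `A = (α - 1) / (αβ - 1)` is strictly increasing in `α` when `β > 1`.
-/

open Set Filter Topology

theorem eventually_slope_posPart_lt {u : ℝ → ℝ} {t d b r : ℝ}
    (hu : HasDerivWithinAt u d (Ici t) t) (hb : 0 ≤ b) (hd : 0 ≤ u t → d ≤ b) (hr : b < r) :
    ∀ᶠ s in 𝓝[>] t, (s - t)⁻¹ * ((u s)⁺ - (u t)⁺) < r := by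
  rcases lt_or_ge (u t) 0 with hneg | hnonneg
  · have hc : Tendsto u (𝓝[>] t) (𝓝 (u t)) :=
      hu.continuousWithinAt.mono Ioi_subset_Ici_self
    filter_upwards [hc.eventually_lt_const hneg] with s hs
    rw [posPart_eq_zero.2 hs.le, posPart_eq_zero.2 hneg.le, sub_self, mul_zero]
    exact hb.trans_lt hr
  · have hslope : Tendsto (fun s => (s - t)⁻¹ * (u s - u t)) (𝓝[>] t) (𝓝 d) := by
      have := hasDerivWithinAt_iff_tendsto_slope.1 hu
      rw [Ici_sdiff_left] at this
      exact this.congr fun s => by rw [slope_def_module, smul_eq_mul]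
    have hlim : max d 0 < r := max_lt ((hd hnonneg).trans_lt hr) (hb.trans_lt hr)
    filter_upwards [(hslope.max tendsto_const_nhds).eventually_lt_const hlim,
      self_mem_nhdsWithin] with s hs hst
    have hst' : 0 ≤ (s - t)⁻¹ := inv_nonneg.2 (sub_nonneg.2 (le_of_lt hst))
    calc (s - t)⁻¹ * ((u s)⁺ - (u t)⁺) ≤ (s - t)⁻¹ * max (u s - u t) 0 := by
          gcongr
          simpa [posPart_def] using max_sub_max_le_max (u s) 0 (u t) 0
      _ = max ((s - t)⁻¹ * (u s - u t)) 0 := by rw [mul_max_of_nonneg _ _ hst', mul_zero]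
      _ < r := hs

theorem nonpos_of_deriv_le_mul_posPart_add {u v du dv : ℝ → ℝ} {a b K : ℝ}
    (hu : ContinuousOn u (Icc a b)) (hv : ContinuousOn v (Icc a b))
    (hu' : ∀ s ∈ Ico a b, HasDerivWithinAt u (du s) (Ici s) s)
    (hv' : ∀ s ∈ Ico a b, HasDerivWithinAt v (dv s) (Ici s) s) (hK : 0 ≤ K)
    (hdu : ∀ s ∈ Ico a b, 0 ≤ u s → du s ≤ K * ((u s)⁺ + (v s)⁺))
    (hdv : ∀ s ∈ Ico a b, 0 ≤ v s → dv s ≤ K * ((u s)⁺ + (v s)⁺))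
    (hua : u a ≤ 0) (hva : v a ≤ 0) :
    ∀ t ∈ Icc a b, u t ≤ 0 ∧ v t ≤ 0 := by
  set g : ℝ → ℝ := fun s => (u s)⁺ + (v s)⁺
  have hg0 : ∀ s, 0 ≤ K * g s := fun s => mul_nonneg hK (by positivity)
  have hslope : ∀ s ∈ Ico a b, ∀ r, 2 * K * g s < r →
      ∃ᶠ z in 𝓝[>] s, (z - s)⁻¹ * (g z - g s) < r := by
    intro s hs r hr
    have hr' : K * g s < K * g s + (r - 2 * K * g s) / 2 := by linarith
    refine Eventually.frequently ?_
    filter_upwards [eventually_slope_posPart_lt (hu' s hs) (hg0 s) (hdu s hs) hr',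
      eventually_slope_posPart_lt (hv' s hs) (hg0 s) (hdv s hs) hr'] with z hzu hzv
    calc (z - s)⁻¹ * (g z - g s)
        = (z - s)⁻¹ * ((u z)⁺ - (u s)⁺) + (z - s)⁻¹ * ((v z)⁺ - (v s)⁺) := by ring
      _ < r := by linarith
  have hgc : ContinuousOn g (Icc a b) :=
    (hu.sup continuousOn_const).add (hv.sup continuousOn_const)
  have hga : g a ≤ 0 := by simp [g, posPart_eq_zero.2 hua, posPart_eq_zero.2 hva]
  intro t ht
  have hgt := le_gronwallBound_of_liminf_deriv_right_le hgc hslope hga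
    (fun s _ => (add_zero _).ge) t ht
  rw [gronwallBound_ε0_δ0] at hgt
  constructor <;>
    linarith [le_posPart (u t), le_posPart (v t), posPart_nonneg (u t), posPart_nonneg (v t)]

theorem nonpos_of_cooperative_deriv_le {u v du dv p q r w : ℝ → ℝ} {a : ℝ}
    (hu : ∀ s ∈ Ici a, HasDerivWithinAt u (du s) (Ici a) s)
    (hv : ∀ s ∈ Ici a, HasDerivWithinAt v (dv s) (Ici a) s)
    (hp : ContinuousOn p (Ici a)) (hq : ContinuousOn q (Ici a))
    (hr : ContinuousOn r (Ici a)) (hw : ContinuousOn w (Ici a))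
    (hq0 : ∀ s ∈ Ici a, 0 ≤ q s) (hw0 : ∀ s ∈ Ici a, 0 ≤ w s)
    (hdu : ∀ s ∈ Ici a, du s ≤ p s * u s + q s * v s)
    (hdv : ∀ s ∈ Ici a, dv s ≤ r s * v s + w s * u s)
    (hua : u a ≤ 0) (hva : v a ≤ 0) :
    ∀ t ∈ Ici a, u t ≤ 0 ∧ v t ≤ 0 := by
  intro t ht
  have hsub : Icc a t ⊆ Ici a := Icc_subset_Ici_self
  obtain ⟨K, hK⟩ := isCompact_Icc.exists_bound_of_continuousOn
    (f := fun s => |p s| + |q s| + |r s| + |w s|)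
    ((((hp.abs.add hq.abs).add hr.abs).add hw.abs).mono hsub)
  have hK0 : 0 ≤ K := (norm_nonneg _).trans (hK a (left_mem_Icc.2 ht))
  have hlin : ∀ c z : ℝ, 0 ≤ c ∨ 0 ≤ z → c * z ≤ |c| * z⁺ := by
    rintro c z (hc | hz)
    · rw [abs_of_nonneg hc]
      exact mul_le_mul_of_nonneg_left (le_posPart z) hc
    · rw [posPart_eq_self.2 hz]
      exact mul_le_mul_of_nonneg_right (le_abs_self c) hz
  refine nonpos_of_deriv_le_mul_posPart_add
    (fun s hs => (hu s (hsub hs)).continuousWithinAt.mono hsub)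
    (fun s hs => (hv s (hsub hs)).continuousWithinAt.mono hsub)
    (fun s hs => (hu s hs.1).mono (Ici_subset_Ici.2 hs.1))
    (fun s hs => (hv s hs.1).mono (Ici_subset_Ici.2 hs.1)) hK0
    (fun s hs hus => ?_) (fun s hs hvs => ?_) hua hva t (right_mem_Icc.2 ht)
  all_goals
    have hKs := (le_abs_self _).trans (hK s (Ico_subset_Icc_self hs))
    have := abs_nonneg (p s); have := abs_nonneg (q s)
    have := abs_nonneg (r s); have := abs_nonneg (w s)
  · calc du s ≤ p s * u s + q s * v s := hdu s hs.1
      _ ≤ |p s| * (u s)⁺ + |q s| * (v s)⁺ :=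
        add_le_add (hlin _ _ (Or.inr hus)) (hlin _ _ (Or.inl (hq0 s hs.1)))
      _ ≤ K * ((u s)⁺ + (v s)⁺) := by
        rw [mul_add]
        gcongr <;> linarith
  · calc dv s ≤ r s * v s + w s * u s := hdv s hs.1
      _ ≤ |r s| * (v s)⁺ + |w s| * (u s)⁺ :=
        add_le_add (hlin _ _ (Or.inr hvs)) (hlin _ _ (Or.inl (hw0 s hs.1)))
      _ ≤ K * ((u s)⁺ + (v s)⁺) := by
        rw [add_comm ((u s)⁺), mul_add]
        gcongr <;> linarith

theorem nonneg_of_hasDerivWithinAt_mul {f h : ℝ → ℝ} {a : ℝ}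
    (hf : ∀ t ∈ Ici a, HasDerivWithinAt f (f t * h t) (Ici a) t)
    (hh : ContinuousOn h (Ici a)) (ha : 0 ≤ f a) :
    ∀ t ∈ Ici a, 0 ≤ f t := fun t ht => by
  have := nonpos_of_cooperative_deriv_le (v := 0) (dv := 0) (q := 0) (r := 0) (w := 0)
    (fun s hs => (hf s hs).neg) (fun s _ => hasDerivWithinAt_const _ _ 0) hh
    continuousOn_const continuousOn_const continuousOn_const (fun _ _ => le_rfl)
    (fun _ _ => le_rfl) (fun s _ => by simp [mul_comm]) (fun _ _ => by simp)
    (neg_nonpos.2 ha) le_rfl t ht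
  exact neg_nonpos.1 this.1

def IsCompetitionSolution (α β δ : ℝ) (x y : ℝ → ℝ) : Prop :=
  (∀ t ∈ Ici (0 : ℝ), HasDerivWithinAt x (x t * (1 - x t - α * y t)) (Ici 0) t) ∧
    ∀ t ∈ Ici (0 : ℝ), HasDerivWithinAt y (δ * y t * (1 - y t - β * x t)) (Ici 0) t

namespace IsCompetitionSolution

variable {α β δ : ℝ} {x y : ℝ → ℝ}

theorem continuousOn_fst (h : IsCompetitionSolution α β δ x y) : ContinuousOn x (Ici 0) :=
  fun t ht => (h.1 t ht).continuousWithinAt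

theorem continuousOn_snd (h : IsCompetitionSolution α β δ x y) : ContinuousOn y (Ici 0) :=
  fun t ht => (h.2 t ht).continuousWithinAt

theorem fst_nonneg (h : IsCompetitionSolution α β δ x y) (h0 : 0 ≤ x 0) :
    ∀ t ∈ Ici 0, 0 ≤ x t := by
  have := h.continuousOn_fst; have := h.continuousOn_snd
  exact nonneg_of_hasDerivWithinAt_mul h.1 (by fun_prop) h0

theorem snd_nonneg (h : IsCompetitionSolution α β δ x y) (h0 : 0 ≤ y 0) :
    ∀ t ∈ Ici 0, 0 ≤ y t := by
  have := h.continuousOn_fst; have := h.continuousOn_snd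
  exact nonneg_of_hasDerivWithinAt_mul (h := fun t => δ * (1 - y t - β * x t))
    (fun t ht => by convert h.2 t ht using 1; ring) (by fun_prop) h0

theorem fst_le_of_alpha_le {α₁ α₂ : ℝ} {x₁ y₁ x₂ y₂ : ℝ → ℝ}
    (h₁ : IsCompetitionSolution α₁ β δ x₁ y₁) (h₂ : IsCompetitionSolution α₂ β δ x₂ y₂)
    (hα₁ : 0 ≤ α₁) (hα : α₁ ≤ α₂) (hβ : 0 ≤ β) (hδ : 0 ≤ δ)
    (hx₁ : 0 ≤ x₁ 0) (hx₂ : 0 ≤ x₂ 0) (hy₂ : 0 ≤ y₂ 0)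
    (hx : x₂ 0 ≤ x₁ 0) (hy : y₁ 0 ≤ y₂ 0) :
    ∀ t ∈ Ici 0, x₂ t ≤ x₁ t ∧ y₁ t ≤ y₂ t := by
  have := h₁.continuousOn_fst; have := h₁.continuousOn_snd
  have := h₂.continuousOn_fst; have := h₂.continuousOn_snd
  have hx₁ := h₁.fst_nonneg hx₁
  have hx₂ := h₂.fst_nonneg hx₂
  have hy₂ := h₂.snd_nonneg hy₂
  have key := nonpos_of_cooperative_deriv_le (u := x₂ - x₁) (v := y₁ - y₂)
    (p := fun s => 1 - α₁ * y₂ s - x₁ s - x₂ s) (q := fun s => α₁ * x₁ s)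
    (r := fun s => δ * (1 - y₁ s - y₂ s - β * x₁ s)) (w := fun s => δ * β * y₂ s)
    (fun s hs => (h₂.1 s hs).sub (h₁.1 s hs)) (fun s hs => (h₁.2 s hs).sub (h₂.2 s hs))
    (by fun_prop) (by fun_prop) (by fun_prop) (by fun_prop)
    (fun s hs => mul_nonneg hα₁ (hx₁ s hs))
    (fun s hs => mul_nonneg (mul_nonneg hδ hβ) (hy₂ s hs))
    (fun s hs => ?_) (fun s hs => le_of_eq (by simp only [Pi.sub_apply]; ring))
    (by simpa using hx) (by simpa using hy)
  · exact fun t ht => ⟨sub_nonpos.1 (key t ht).1, sub_nonpos.1 (key t ht).2⟩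
  · have hid : x₂ s * (1 - x₂ s - α₂ * y₂ s) - x₁ s * (1 - x₁ s - α₁ * y₁ s) =
        (1 - α₁ * y₂ s - x₁ s - x₂ s) * (x₂ s - x₁ s) + α₁ * x₁ s * (y₁ s - y₂ s)
          - (α₂ - α₁) * (x₂ s * y₂ s) := by ring
    have : 0 ≤ (α₂ - α₁) * (x₂ s * y₂ s) :=
      mul_nonneg (sub_nonneg.2 hα) (mul_nonneg (hx₂ s hs) (hy₂ s hs))
    simp only [Pi.sub_apply]
    linarith

end IsCompetitionSolution

theorem sub_one_div_mul_sub_one_lt {α₁ α₂ β : ℝ} (hβ : 1 < β) (hα₁ : 1 < α₁) (hα : α₁ < α₂) :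
    (α₁ - 1) / (α₁ * β - 1) < (α₂ - 1) / (α₂ * β - 1) := by
  have hd₁ : 0 < α₁ * β - 1 := by nlinarith
  have hd₂ : 0 < α₂ * β - 1 := by nlinarith
  rw [div_lt_div_iff₀ hd₁ hd₂]
  nlinarith [mul_pos (sub_pos.2 hβ) (sub_pos.2 hα)]

theorem stmt_15_general (β δ x₀ : ℝ) (hβ : 1 < β) (hδ : 0 < δ) (hx₀ : 0 < x₀)
    (α₁ α₂ : ℝ) (hα₁ : 1 < α₁) (hα₁₂ : α₁ < α₂)
    (A₁ B₁ A₂ B₂ : ℝ)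
    (hA₁ : A₁ = (α₁ - 1) / (α₁ * β - 1))
    (hA₂ : A₂ = (α₂ - 1) / (α₂ * β - 1))
    (y₁ y₂ : ℝ) (hy₂ : 0 < y₂)
    (x1 Y1 : ℝ → ℝ)
    (hx1 : ∀ t ∈ Set.Ici (0 : ℝ),
      HasDerivWithinAt x1 (x1 t * (1 - x1 t - α₁ * Y1 t)) (Set.Ici 0) t)
    (hY1 : ∀ t ∈ Set.Ici (0 : ℝ),
      HasDerivWithinAt Y1 (δ * Y1 t * (1 - Y1 t - β * x1 t)) (Set.Ici 0) t)
    (hx10 : x1 0 = x₀) (hY10 : Y1 0 = y₁)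
    (hconv1 : Tendsto (fun t => (x1 t, Y1 t)) atTop (nhds (A₁, B₁)))
    (x2 Y2 : ℝ → ℝ)
    (hx2 : ∀ t ∈ Set.Ici (0 : ℝ),
      HasDerivWithinAt x2 (x2 t * (1 - x2 t - α₂ * Y2 t)) (Set.Ici 0) t)
    (hY2 : ∀ t ∈ Set.Ici (0 : ℝ),
      HasDerivWithinAt Y2 (δ * Y2 t * (1 - Y2 t - β * x2 t)) (Set.Ici 0) t)
    (hx20 : x2 0 = x₀) (hY20 : Y2 0 = y₂)
    (hconv2 : Tendsto (fun t => (x2 t, Y2 t)) atTop (nhds (A₂, B₂))) :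
    y₂ < y₁ := by
  by_contra! hy
  have hcomp := IsCompetitionSolution.fst_le_of_alpha_le (β := β) (δ := δ) ⟨hx1, hY1⟩ ⟨hx2, hY2⟩
    (by linarith) hα₁₂.le (by linarith) hδ.le (hx10 ▸ hx₀.le) (hx20 ▸ hx₀.le) (hY20 ▸ hy₂.le)
    (by rw [hx10, hx20]) (by rwa [hY10, hY20])
  have hA : A₂ ≤ A₁ := le_of_tendsto_of_tendsto hconv2.fst_nhds hconv1.fst_nhds
    (eventually_ge_atTop 0 |>.mono fun t ht => (hcomp t ht).1)
  rw [hA₁, hA₂] at hA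
  exact hA.not_gt (sub_one_div_mul_sub_one_lt hβ hα₁ hα₁₂)

/-- The separatrix value `s(x₀, α)` is strictly decreasing in the competition
parameter `α`: if `1 < α₁ < α₂` and `(x₀, yᵢ)` lies on the stable manifold of
the saddle `(Aᵢ, Bᵢ)` for the system with parameter `αᵢ`, then `y₂ < y₁`. -/
theorem stmt_15 (β δ x₀ : ℝ) (hβ : 1 < β) (hδ : 0 < δ) (hx₀ : 0 < x₀)
    (α₁ α₂ : ℝ) (hα₁ : 1 < α₁) (hα₁₂ : α₁ < α₂)
    (A₁ B₁ A₂ B₂ : ℝ)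
    (hA₁ : A₁ = (α₁ - 1) / (α₁ * β - 1)) (hB₁ : B₁ = (β - 1) / (α₁ * β - 1))
    (hA₂ : A₂ = (α₂ - 1) / (α₂ * β - 1)) (hB₂ : B₂ = (β - 1) / (α₂ * β - 1))
    (y₁ y₂ : ℝ) (hy₁ : 0 < y₁) (hy₂ : 0 < y₂)
    (x1 Y1 : ℝ → ℝ)
    (hx1 : ∀ t ∈ Set.Ici (0 : ℝ),
      HasDerivWithinAt x1 (x1 t * (1 - x1 t - α₁ * Y1 t)) (Set.Ici 0) t)
    (hY1 : ∀ t ∈ Set.Ici (0 : ℝ),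
      HasDerivWithinAt Y1 (δ * Y1 t * (1 - Y1 t - β * x1 t)) (Set.Ici 0) t)
    (hx10 : x1 0 = x₀) (hY10 : Y1 0 = y₁)
    (hconv1 : Tendsto (fun t => (x1 t, Y1 t)) atTop (nhds (A₁, B₁)))
    (x2 Y2 : ℝ → ℝ)
    (hx2 : ∀ t ∈ Set.Ici (0 : ℝ),
      HasDerivWithinAt x2 (x2 t * (1 - x2 t - α₂ * Y2 t)) (Set.Ici 0) t)
    (hY2 : ∀ t ∈ Set.Ici (0 : ℝ),
      HasDerivWithinAt Y2 (δ * Y2 t * (1 - Y2 t - β * x2 t)) (Set.Ici 0) t)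
    (hx20 : x2 0 = x₀) (hY20 : Y2 0 = y₂)
    (hconv2 : Tendsto (fun t => (x2 t, Y2 t)) atTop (nhds (A₂, B₂))) :
    y₂ < y₁ :=
  stmt_15_general β δ x₀ hβ hδ hx₀ α₁ α₂ hα₁ hα₁₂ A₁ B₁ A₂ B₂ hA₁ hA₂ y₁ y₂ hy₂ x1 Y1 hx1 hY1 hx10
    hY10 hconv1 x2 Y2 hx2 hY2 hx20 hY20 hconv2
end
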